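/- arXiv:2601.16139 — 7 statements merged into one kernel-verified Lean document; each statement's English description precedes it below -/
import Mathlib

section
/- The kernel-based effective dimension never exceeds the kernel-based upper metric dimension: d_K = limsup_{n→∞} log n / log(1/w_K(n)) ≤ limsup_{ε→0+} log N(ε,Ω,ϱ) / log(1/ε) = d_ϱ, where both limsups are taken in [0,∞] with the convention log(1/0) = +∞ (and a ratio with denominator +∞ equal to 0). -/
open MeasureTheory Filter
open scoped ENNReal

noncomputable section

/-- The Kolmogorov `n`-width of the image of `Ω` under `Φ` in the Hilbert space `H`. -/
def kolmWidth {E H : Type*} [NormedAddCommGroup H] [InnerProductSpace ℝ H]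
    (Ω : Set E) (Φ : E → H) (n : ℕ) : ℝ :=
  ⨅ L : {L : Submodule ℝ H // ∃ s : Finset H, s.card ≤ n ∧ L = Submodule.span ℝ (s : Set H)},
    ⨆ x : Ω, Metric.infDist (Φ (x : E)) (L.1 : Set H)

/-- The `ε`-covering number of `(Ω, ϱ)`: the least `M` such that `Ω` is covered by `M`
closed `ϱ`-balls of radius `ε` with centers in `Ω`. -/
def covN {E : Type*} (Ω : Set E) (ϱ : E → E → ℝ) (ε : ℝ) : ℕ :=
  sInf {M : ℕ | ∃ z : Fin M → E, (∀ i, z i ∈ Ω) ∧ ∀ x ∈ Ω, ∃ i, ϱ x (z i) ≤ ε}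

/-- The kernel-based upper metric (Minkowski) dimension
`d_ϱ = limsup_{ε→0+} log N(ε,Ω,ϱ) / log (1/ε)`, taken in `[0,∞]`. -/
def metricDim {E : Type*} (Ω : Set E) (ϱ : E → E → ℝ) : ℝ≥0∞ :=
  Filter.limsup (fun ε : ℝ => ENNReal.ofReal (Real.log (covN Ω ϱ ε) / Real.log (1 / ε)))
    (nhdsWithin 0 (Set.Ioi 0))

/-- The kernel-based effective dimension `d_K = limsup_{n→∞} log n / log (1/w_K(n))`,
taken in `[0,∞]`, with the convention `log (1/0) = +∞` and a ratio with denominator `+∞`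
equal to `0`. -/
def effDim (w : ℕ → ℝ) : ℝ≥0∞ :=
  Filter.limsup (fun n : ℕ =>
    if w n = 0 then 0 else ENNReal.ofReal (Real.log n / Real.log (1 / w n))) Filter.atTop

/-! The centres of an `ε`-cover of `(Ω, ϱ)` span a subspace of dimension at most `N(ε)` that
lies within `ε` of every `Φ x`, so `w_K(N(ε)) ≤ ε`. If `d_ϱ < t`, then `N(ε) < ε^{-t}` for small
`ε`; at `ε = n^{-1/t}` this reads `N(ε) < n`, so by monotonicity of the widths
`w_K(n) ≤ n^{-1/t}`, i.e. `log n / log (1 / w_K(n)) ≤ t`. -/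

lemma effDim_le_of_eventually_le_rpow {w : ℕ → ℝ} (hw0 : ∀ n, 0 ≤ w n) {t : ℝ} (ht : 0 < t)
    (hw : ∀ᶠ n : ℕ in atTop, w n ≤ (n : ℝ) ^ (-t⁻¹)) : effDim w ≤ ENNReal.ofReal t := by
  refine limsup_le_of_le (by isBoundedDefault) ?_
  filter_upwards [hw, eventually_ge_atTop 2] with n hwn hn
  split_ifs with h0
  · exact zero_le
  have hn1 : (1 : ℝ) < n := by exact_mod_cast hn
  have hlogn : 0 < Real.log n := Real.log_pos hn1
  have hlog : t⁻¹ * Real.log n ≤ Real.log (1 / w n) := by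
    rw [one_div, Real.log_inv, le_neg, ← neg_mul, ← Real.log_rpow (by positivity)]
    exact Real.log_le_log ((hw0 n).lt_of_ne' h0) hwn
  refine ENNReal.ofReal_le_ofReal ((div_le_iff₀ (lt_of_lt_of_le (by positivity) hlog)).2 ?_)
  calc Real.log n = t * (t⁻¹ * Real.log n) := by field_simp
    _ ≤ t * Real.log (1 / w n) := by gcongr

lemma tendsto_natCast_rpow_neg_nhdsGT_zero {t : ℝ} (ht : 0 < t) :
    Tendsto (fun n : ℕ => (n : ℝ) ^ (-t)) atTop (nhdsWithin 0 (Set.Ioi 0)) :=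
  tendsto_nhdsWithin_iff.2
    ⟨(tendsto_rpow_neg_atTop ht).comp tendsto_natCast_atTop_atTop,
      (eventually_ge_atTop 1).mono fun _ hn => Real.rpow_pos_of_pos (by exact_mod_cast hn) _⟩

lemma lt_of_log_div_log_one_div_rpow_lt {N n : ℕ} {t : ℝ} (ht : 0 < t) (hn : 1 < n)
    (h : Real.log N / Real.log (1 / (n : ℝ) ^ (-t⁻¹)) < t) : N < n := by
  have hn0 : (0 : ℝ) < n := by positivity
  have hlogn : 0 < Real.log n := Real.log_pos (by exact_mod_cast hn)
  rw [one_div, ← Real.rpow_neg hn0.le, neg_neg, Real.log_rpow hn0,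
    div_lt_iff₀ (by positivity), ← mul_assoc, mul_inv_cancel₀ ht.ne', one_mul] at h
  rcases N.eq_zero_or_pos with rfl | hN
  · omega
  · exact_mod_cast (Real.log_lt_log_iff (by positivity) hn0).1 h

theorem effDim_le_limsup_of_le {w : ℕ → ℝ} {N : ℝ → ℕ} (hw0 : ∀ n, 0 ≤ w n) (hw : Antitone w)
    (hN : ∀ ε > 0, w (N ε) ≤ ε) :
    effDim w ≤ limsup (fun ε => ENNReal.ofReal (Real.log (N ε) / Real.log (1 / ε)))
      (nhdsWithin 0 (Set.Ioi 0)) := by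
  refine le_of_forall_gt_imp_ge_of_dense fun c hc => ?_
  rcases eq_or_ne c ⊤ with rfl | hc_top
  · exact le_top
  have ht : 0 < c.toReal := ENNReal.toReal_pos (pos_of_gt hc).ne' hc_top
  rw [← ENNReal.ofReal_toReal hc_top] at hc ⊢
  refine effDim_le_of_eventually_le_rpow hw0 ht ?_
  filter_upwards [(tendsto_natCast_rpow_neg_nhdsGT_zero (inv_pos.2 ht)).eventually
    (eventually_lt_of_limsup_lt hc), eventually_gt_atTop 1] with n hn hn1
  have hNn := lt_of_log_div_log_one_div_rpow_lt ht hn1 ((ENNReal.ofReal_lt_ofReal_iff ht).1 hn)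
  exact (hw hNn.le).trans (hN _ (Real.rpow_pos_of_pos (by positivity) _))

lemma exists_fin_cover_of_isCompact {E H : Type*} [TopologicalSpace E]
    [SeminormedAddCommGroup H] {Ω : Set E} {Φ : E → H} (hΩ : IsCompact Ω)
    (hΦ : ContinuousOn Φ Ω) {ε : ℝ} (hε : 0 < ε) :
    ∃ M, ∃ z : Fin M → E, (∀ i, z i ∈ Ω) ∧ ∀ x ∈ Ω, ∃ i, ‖Φ x - Φ (z i)‖ ≤ ε := by
  obtain ⟨u, huΩ, hu, hcov⟩ := Set.exists_subset_image_finite_and.1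
    ((hΩ.image_of_continuousOn hΦ).finite_cover_balls hε)
  let e := hu.toFinset.equivFin
  refine ⟨_, fun i => e.symm i, fun i => huΩ (hu.mem_toFinset.1 (e.symm i).2), fun x hx => ?_⟩
  obtain ⟨_, ⟨y, hy, rfl⟩, hxy⟩ := Set.mem_iUnion₂.1 (hcov (Set.mem_image_of_mem Φ hx))
  exact ⟨e ⟨y, hu.mem_toFinset.2 hy⟩, by simpa using (mem_ball_iff_norm.1 hxy).le⟩

section KolmogorovWidth

variable {E H : Type*} [NormedAddCommGroup H] [InnerProductSpace ℝ H] (Ω : Set E) (Φ : E → H)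

instance (n : ℕ) : Nonempty {L : Submodule ℝ H //
    ∃ s : Finset H, s.card ≤ n ∧ L = Submodule.span ℝ (s : Set H)} :=
  ⟨⟨⊥, ∅, by simp⟩⟩

lemma kolmWidth_bddBelow (n : ℕ) :
    BddBelow (Set.range fun L : {L : Submodule ℝ H //
        ∃ s : Finset H, s.card ≤ n ∧ L = Submodule.span ℝ (s : Set H)} =>
      ⨆ x : Ω, Metric.infDist (Φ x) (L.1 : Set H)) :=
  ⟨0, by rintro _ ⟨L, rfl⟩; exact Real.iSup_nonneg fun _ => Metric.infDist_nonneg⟩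

lemma kolmWidth_nonneg (n : ℕ) : 0 ≤ kolmWidth Ω Φ n :=
  Real.iInf_nonneg fun _ => Real.iSup_nonneg fun _ => Metric.infDist_nonneg

lemma kolmWidth_antitone : Antitone (kolmWidth Ω Φ) := fun _ _ hmn =>
  le_ciInf fun ⟨L, s, hs, hL⟩ => ciInf_le (kolmWidth_bddBelow Ω Φ _) ⟨L, s, hs.trans hmn, hL⟩

lemma kolmWidth_le_of_finset {n : ℕ} {ε : ℝ} (hε : 0 ≤ ε) (s : Finset H) (hs : s.card ≤ n)
    (hcov : ∀ x ∈ Ω, ∃ y ∈ s, dist (Φ x) y ≤ ε) : kolmWidth Ω Φ n ≤ ε := by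
  refine (ciInf_le (kolmWidth_bddBelow Ω Φ n) ⟨_, s, hs, rfl⟩).trans
    (Real.iSup_le (fun x => ?_) hε)
  obtain ⟨y, hy, hxy⟩ := hcov x x.2
  exact (Metric.infDist_le_dist_of_mem (Submodule.subset_span hy)).trans hxy

lemma kolmWidth_covN_le [TopologicalSpace E] (hΩ : IsCompact Ω) (hΦ : ContinuousOn Φ Ω) {ε : ℝ}
    (hε : 0 < ε) :
    kolmWidth Ω Φ (covN Ω (fun x y => ‖Φ x - Φ y‖) ε) ≤ ε := by
  classical
  obtain ⟨z, -, hz⟩ := Nat.sInf_mem (exists_fin_cover_of_isCompact hΩ hΦ hε)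
  refine kolmWidth_le_of_finset Ω Φ hε.le (Finset.univ.image (Φ ∘ z))
    (Finset.card_image_le.trans_eq (Finset.card_fin _)) fun x hx => ?_
  obtain ⟨i, hi⟩ := hz x hx
  exact ⟨Φ (z i), Finset.mem_image_of_mem _ (Finset.mem_univ i), by rwa [dist_eq_norm]⟩

end KolmogorovWidth

theorem effDim_le_metricDim_general {d : ℕ} {H : Type*} [NormedAddCommGroup H] [InnerProductSpace ℝ H]
    (Ω : Set (EuclideanSpace ℝ (Fin d))) (hΩ : IsCompact Ω)
    (Φ : EuclideanSpace ℝ (Fin d) → H) (hΦ : ContinuousOn Φ Ω) :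
    effDim (kolmWidth Ω Φ) ≤ metricDim Ω (fun x y => ‖Φ x - Φ y‖) :=
  effDim_le_limsup_of_le (kolmWidth_nonneg Ω Φ) (kolmWidth_antitone Ω Φ)
    fun _ hε => kolmWidth_covN_le Ω Φ hΩ hΦ hε

/-- the kernel-based effective dimension never exceeds the kernel-based
upper metric dimension: `d_K ≤ d_ϱ`. -/
theorem effDim_le_metricDim {d : ℕ} {H : Type*} [NormedAddCommGroup H] [InnerProductSpace ℝ H]
    (Ω : Set (EuclideanSpace ℝ (Fin d))) (hΩ : IsCompact Ω) (hne : Ω.Nonempty)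
    (Φ : EuclideanSpace ℝ (Fin d) → H) (hΦ : ContinuousOn Φ Ω) :
    effDim (kolmWidth Ω Φ) ≤ metricDim Ω (fun x y => ‖Φ x - Φ y‖) :=
  effDim_le_metricDim_general Ω hΩ Φ hΦ

end
end

section
/- Let x_1, …, x_n ∈ Ω be such that the Gram matrix G = [K(x_i,x_j)]_{i,j=1}^n is invertible, and define S_n(x) = K(x,x) − v(x)ᵀ G⁻¹ v(x) with v(x) = (K(x_1,x),…,K(x_n,x))ᵀ (and S_0(x) = K(x,x)). Then for all x, y ∈ Ω, √(S_n(x)) − √(S_n(y)) ≤ ϱ(x,y); that is, x ↦ √(S_n(x)) is 1-Lipschitz with respect to the canonical pseudometric ϱ. -/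
open MeasureTheory Filter
open scoped ENNReal

noncomputable section

/-- The Gram matrix `[K(x_i,x_j)]` of the points `x : Fin n → E`, where
`K(x,y) = ⟪Φ x, Φ y⟫`. -/
def gramM {E H : Type*} [NormedAddCommGroup H] [InnerProductSpace ℝ H]
    (Φ : E → H) {n : ℕ} (x : Fin n → E) : Matrix (Fin n) (Fin n) ℝ :=
  Matrix.of fun i j => (inner ℝ (Φ (x i)) (Φ (x j)) : ℝ)

/-- The vector `v(y) = (K(x_1,y), …, K(x_n,y))`. -/
def kvec {E H : Type*} [NormedAddCommGroup H] [InnerProductSpace ℝ H]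
    (Φ : E → H) {n : ℕ} (x : Fin n → E) (y : E) : Fin n → ℝ :=
  fun i => (inner ℝ (Φ (x i)) (Φ y) : ℝ)

/-- `S_n(y) = K(y,y) − v(y)ᵀ G⁻¹ v(y)`; for `n = 0` this is `S_0(y) = K(y,y)`. -/
def Sfun {E H : Type*} [NormedAddCommGroup H] [InnerProductSpace ℝ H]
    (Φ : E → H) {n : ℕ} (x : Fin n → E) (y : E) : ℝ :=
  (inner ℝ (Φ y) (Φ y) : ℝ) -
    dotProduct (kvec Φ x y) (Matrix.mulVec (gramM Φ x)⁻¹ (kvec Φ x y))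

/-!
The vector `G⁻¹ v(y)` solves the normal equations, so it holds the coefficients of the orthogonal
projection of `Φ y` onto `span {Φ x₁, …, Φ xₙ}`. Hence `S_n(y)` is the squared distance from `Φ y`
to that subspace, and the distance to a subspace is `1`-Lipschitz.
-/

open Submodule Matrix
open scoped InnerProductSpace

instance FiniteDimensional.span_range {𝕜 E ι : Type*} [DivisionRing 𝕜] [AddCommGroup E]
    [Module 𝕜 E] [Finite ι] (v : ι → E) : FiniteDimensional 𝕜 (span 𝕜 (Set.range v)) :=
  FiniteDimensional.span_of_finite 𝕜 (Set.finite_range v)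

theorem Submodule.norm_sub_starProjection_sub_le {𝕜 E : Type*} [RCLike 𝕜] [NormedAddCommGroup E]
    [InnerProductSpace 𝕜 E] (K : Submodule 𝕜 E) [K.HasOrthogonalProjection] (u w : E) :
    ‖u - K.starProjection u‖ - ‖w - K.starProjection w‖ ≤ ‖u - w‖ :=
  calc ‖u - K.starProjection u‖ - ‖w - K.starProjection w‖
      = ‖Kᗮ.starProjection u‖ - ‖Kᗮ.starProjection w‖ := by
        simp only [starProjection_orthogonal_val]
    _ ≤ ‖Kᗮ.starProjection (u - w)‖ := by simpa only [map_sub] using norm_sub_norm_le _ _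
    _ ≤ ‖u - w‖ := Kᗮ.norm_starProjection_apply_le _

section GramProjection

variable {H ι : Type*} [NormedAddCommGroup H] [InnerProductSpace ℝ H] [Fintype ι] [DecidableEq ι]
  {v : ι → H}

theorem starProjection_span_range_eq_sum_gram_inv (hG : IsUnit (gram ℝ v).det) (u : H) :
    (span ℝ (Set.range v)).starProjection u =
      ∑ i, ((gram ℝ v)⁻¹ *ᵥ fun j => ⟪v j, u⟫_ℝ) i • v i := by
  set c := (gram ℝ v)⁻¹ *ᵥ fun j => ⟪v j, u⟫_ℝ
  have normal_eqns (i : ι) : ∑ j, ⟪v i, v j⟫_ℝ * c j = ⟪v i, u⟫_ℝ :=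
    congrFun (by rw [mulVec_mulVec, mul_nonsing_inv _ hG, one_mulVec] :
      gram ℝ v *ᵥ c = fun j => ⟪v j, u⟫_ℝ) i
  have perp_generators : Set.range v ⊆ (ℝ ∙ (u - ∑ j, c j • v j))ᗮ := by
    rintro _ ⟨i, rfl⟩
    rw [SetLike.mem_coe, mem_orthogonal_singleton_iff_inner_right, inner_sub_left, sum_inner,
      sub_eq_zero, real_inner_comm, ← normal_eqns i]
    refine Finset.sum_congr rfl fun j _ => ?_
    rw [real_inner_smul_left, real_inner_comm, mul_comm]
  refine eq_starProjection_of_mem_of_inner_eq_zero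
    (sum_mem fun i _ => smul_mem _ _ (subset_span ⟨i, rfl⟩)) fun w hw => ?_
  exact mem_orthogonal_singleton_iff_inner_right.1 (span_le.2 perp_generators hw)

theorem inner_self_sub_dotProduct_gram_inv_eq_norm_sq (hG : IsUnit (gram ℝ v).det) (u : H) :
    ⟪u, u⟫_ℝ - (fun i => ⟪v i, u⟫_ℝ) ⬝ᵥ ((gram ℝ v)⁻¹ *ᵥ fun i => ⟪v i, u⟫_ℝ) =
      ‖u - (span ℝ (Set.range v)).starProjection u‖ ^ 2 := by
  set P := (span ℝ (Set.range v)).starProjection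
  have hdot : (fun i => ⟪v i, u⟫_ℝ) ⬝ᵥ ((gram ℝ v)⁻¹ *ᵥ fun i => ⟪v i, u⟫_ℝ) = ⟪P u, u⟫_ℝ := by
    simp only [P, starProjection_span_range_eq_sum_gram_inv hG, sum_inner, real_inner_smul_left,
      dotProduct, mul_comm]
  rw [hdot, ← inner_sub_left, ← real_inner_self_eq_norm_sq, inner_sub_right (u - P u) u,
    starProjection_inner_eq_zero _ _ (starProjection_apply_mem _ u), sub_zero]

end GramProjection

theorem Sfun_eq_norm_sub_starProjection_sq {E H : Type*} [NormedAddCommGroup H]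
    [InnerProductSpace ℝ H] {Φ : E → H} {n : ℕ} {x : Fin n → E} (hG : IsUnit (gramM Φ x).det)
    (y : E) : Sfun Φ x y = ‖Φ y - (span ℝ (Set.range (Φ ∘ x))).starProjection (Φ y)‖ ^ 2 :=
  inner_self_sub_dotProduct_gram_inv_eq_norm_sq hG (Φ y)

theorem sqrt_Sfun_lipschitz_general {d : ℕ} {H : Type*}
    [NormedAddCommGroup H] [InnerProductSpace ℝ H]
    (Ω : Set (EuclideanSpace ℝ (Fin d)))
    (Φ : EuclideanSpace ℝ (Fin d) → H)
    (n : ℕ) (x : Fin n → EuclideanSpace ℝ (Fin d))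
    (hG : IsUnit (gramM Φ x).det) :
    ∀ y ∈ Ω, ∀ z ∈ Ω,
      Real.sqrt (Sfun Φ x y) - Real.sqrt (Sfun Φ x z) ≤ ‖Φ y - Φ z‖ := by
  intro y _ z _
  rw [Sfun_eq_norm_sub_starProjection_sq hG, Sfun_eq_norm_sub_starProjection_sq hG,
    Real.sqrt_sq (norm_nonneg _), Real.sqrt_sq (norm_nonneg _)]
  exact norm_sub_starProjection_sub_le _ _ _

/-- if the Gram matrix of `x_1,…,x_n ∈ Ω` is invertible, then
`√(S_n(y)) − √(S_n(z)) ≤ ϱ(y,z) = ‖Φ y − Φ z‖` for all `y, z ∈ Ω`; i.e. `√S_n` is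
`1`-Lipschitz with respect to the canonical pseudometric. -/
theorem sqrt_Sfun_lipschitz {d : ℕ} {H : Type*}
    [NormedAddCommGroup H] [InnerProductSpace ℝ H]
    (Ω : Set (EuclideanSpace ℝ (Fin d))) (hΩ : IsCompact Ω) (hne : Ω.Nonempty)
    (Φ : EuclideanSpace ℝ (Fin d) → H) (hΦ : ContinuousOn Φ Ω)
    (n : ℕ) (x : Fin n → EuclideanSpace ℝ (Fin d)) (hx : ∀ i, x i ∈ Ω)
    (hG : IsUnit (gramM Φ x).det) :
    ∀ y ∈ Ω, ∀ z ∈ Ω,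
      Real.sqrt (Sfun Φ x y) - Real.sqrt (Sfun Φ x z) ≤ ‖Φ y - Φ z‖ :=
  sqrt_Sfun_lipschitz_general Ω Φ n x hG

end
end

section
/- Let Ω_1 ⊆ Ω be an ε-net in (Ω,ϱ), i.e. for every x ∈ Ω there exists z ∈ Ω_1 with ϱ(x,z) ≤ ε. Then for every t ≥ 0 and all x_1, …, x_t ∈ Ω whose Gram matrix G = [K(x_i,x_j)]_{i,j=1}^t is invertible (no condition when t = 0), one has sup_{z∈Ω_1} √(S_t(z)) ≥ w_K(t) − ε, where S_t(x) = K(x,x) − v(x)ᵀ G⁻¹ v(x), v(x) = (K(x_1,x),…,K(x_t,x))ᵀ, and S_0(x) = K(x,x). In particular, the values w_t produced by the greedy n-width algorithm run on Ω_1 satisfy w_t ≥ w_K(t) − ε for all t. -/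
open MeasureTheory Filter
open scoped ENNReal

noncomputable section

/-! When the Gram matrix `G` is invertible, `S_t(z) = ‖Φ z - P z‖²` where `P z` is the orthogonal
projection of `Φ z` onto `L = span {Φ x_i}`. Hence `dist (Φ z, L) ≤ √S_t(z) ≤ ‖Φ z‖`, the second
bound making the supremum over `Ω₁` finite. As `dim L ≤ t`, `w_K(t) ≤ sup_{y ∈ Ω} dist (Φ y, L)`,
and replacing `y` by an `ε`-close point of `Ω₁` changes `dist (Φ y, L)` by at most `ε`. -/

open scoped Matrix RealInnerProductSpace

section GramProjection

variable {E H : Type*} [NormedAddCommGroup H] [InnerProductSpace ℝ H] (Φ : E → H) {n : ℕ}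
  (x : Fin n → E)

/-- When the Gram matrix is invertible, this is the orthogonal projection of `Φ z` onto the span
of the `Φ (x i)`. -/
def gramProj (z : E) : H :=
  ∑ i, ((gramM Φ x)⁻¹ *ᵥ kvec Φ x z) i • Φ (x i)

lemma gramProj_mem_span (z : E) :
    gramProj Φ x z ∈ Submodule.span ℝ (Set.range (Φ ∘ x)) :=
  Submodule.sum_mem _ fun i _ => Submodule.smul_mem _ _ (Submodule.subset_span ⟨i, rfl⟩)

lemma inner_gramProj (z : E) :
    ⟪Φ z, gramProj Φ x z⟫ = kvec Φ x z ⬝ᵥ (gramM Φ x)⁻¹ *ᵥ kvec Φ x z := by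
  rw [gramProj, inner_sum, dotProduct_comm]
  simp only [real_inner_smul_right, dotProduct, kvec, real_inner_comm (Φ z)]

lemma norm_gramProj_sq (hG : IsUnit (gramM Φ x).det) (z : E) :
    ‖gramProj Φ x z‖ ^ 2 = kvec Φ x z ⬝ᵥ (gramM Φ x)⁻¹ *ᵥ kvec Φ x z := by
  set c := (gramM Φ x)⁻¹ *ᵥ kvec Φ x z
  have hGc : gramM Φ x *ᵥ c = kvec Φ x z := by
    rw [Matrix.mulVec_mulVec, Matrix.mul_nonsing_inv _ hG, Matrix.one_mulVec]
  have hgram : star c ⬝ᵥ gramM Φ x *ᵥ c = ‖gramProj Φ x z‖ ^ 2 := by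
    rw [← real_inner_self_eq_norm_sq]
    exact Matrix.star_dotProduct_gram_mulVec (Φ ∘ x) c c
  rw [← hgram, star_trivial, hGc, dotProduct_comm]

lemma Sfun_eq_norm_sub_gramProj_sq (hG : IsUnit (gramM Φ x).det) (z : E) :
    Sfun Φ x z = ‖Φ z - gramProj Φ x z‖ ^ 2 := by
  rw [Sfun, norm_sub_sq_real, inner_gramProj, norm_gramProj_sq Φ x hG,
    real_inner_self_eq_norm_sq]
  ring

lemma sqrt_Sfun_le_norm (hG : IsUnit (gramM Φ x).det) (z : E) :
    √(Sfun Φ x z) ≤ ‖Φ z‖ := by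
  refine Real.sqrt_le_iff.mpr ⟨norm_nonneg _, ?_⟩
  rw [Sfun, real_inner_self_eq_norm_sq, ← norm_gramProj_sq Φ x hG]
  linarith [sq_nonneg ‖gramProj Φ x z‖]

lemma infDist_span_le_sqrt_Sfun (hG : IsUnit (gramM Φ x).det) (z : E) :
    Metric.infDist (Φ z) (Submodule.span ℝ (Set.range (Φ ∘ x))) ≤ √(Sfun Φ x z) := by
  rw [Sfun_eq_norm_sub_gramProj_sq Φ x hG, Real.sqrt_sq (norm_nonneg _), ← dist_eq_norm]
  exact Metric.infDist_le_dist_of_mem (gramProj_mem_span Φ x z)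

end GramProjection

lemma kolmWidth_le_iSup_infDist_span {E H ι : Type*} [NormedAddCommGroup H]
    [InnerProductSpace ℝ H] [Fintype ι] (Ω : Set E) (Φ : E → H) {n : ℕ} (u : ι → H)
    (hι : Fintype.card ι ≤ n) :
    kolmWidth Ω Φ n ≤ ⨆ y : Ω, Metric.infDist (Φ y) (Submodule.span ℝ (Set.range u)) := by
  classical
  have hspan : ∃ s : Finset H, s.card ≤ n ∧
      Submodule.span ℝ (Set.range u) = Submodule.span ℝ (s : Set H) :=
    ⟨Finset.univ.image u, Finset.card_image_le.trans (Finset.card_univ.trans_le hι), by simp⟩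
  refine ciInf_le ⟨0, ?_⟩ (⟨Submodule.span ℝ (Set.range u), hspan⟩ : {L : Submodule ℝ H //
    ∃ s : Finset H, s.card ≤ n ∧ L = Submodule.span ℝ (s : Set H)})
  rintro _ ⟨L, rfl⟩
  exact Real.iSup_nonneg fun _ => Metric.infDist_nonneg

lemma iSup_infDist_le_iSup_add_of_net {E H : Type*} [SeminormedAddCommGroup H]
    {Ω Ω₁ : Set E} [Nonempty Ω] {Φ : E → H} {ε : ℝ}
    (hnet : ∀ y ∈ Ω, ∃ z ∈ Ω₁, ‖Φ y - Φ z‖ ≤ ε) (s : Set H) {g : E → ℝ}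
    (hg : BddAbove (Set.range fun z : Ω₁ => g z))
    (hgs : ∀ z ∈ Ω₁, Metric.infDist (Φ z) s ≤ g z) :
    ⨆ y : Ω, Metric.infDist (Φ y) s ≤ (⨆ z : Ω₁, g z) + ε := by
  refine ciSup_le fun y => ?_
  obtain ⟨z, hz, hyz⟩ := hnet y y.2
  calc Metric.infDist (Φ y) s ≤ Metric.infDist (Φ z) s + dist (Φ y) (Φ z) :=
        Metric.infDist_le_infDist_add_dist
    _ ≤ (⨆ z : Ω₁, g z) + ε := by
        rw [dist_eq_norm]
        exact add_le_add ((hgs z hz).trans (le_ciSup hg ⟨z, hz⟩)) hyz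

/-- if `Ω₁ ⊆ Ω` is an `ε`-net of `(Ω, ϱ)` (every point of `Ω` is within
`ϱ`-distance `ε` of `Ω₁`), then for every `t ≥ 0` and all `x_1,…,x_t ∈ Ω` with invertible
Gram matrix (no condition when `t = 0`),
`sup_{z ∈ Ω₁} √(S_t(z)) ≥ w_K(t) − ε`. -/
theorem net_sup_sqrt_S_ge {d : ℕ} {H : Type*}
    [NormedAddCommGroup H] [InnerProductSpace ℝ H]
    (Ω : Set (EuclideanSpace ℝ (Fin d))) (hΩ : IsCompact Ω) (hne : Ω.Nonempty)
    (Φ : EuclideanSpace ℝ (Fin d) → H) (hΦ : ContinuousOn Φ Ω)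
    (ε : ℝ) (Ω₁ : Set (EuclideanSpace ℝ (Fin d))) (hsub : Ω₁ ⊆ Ω)
    (hnet : ∀ x ∈ Ω, ∃ z ∈ Ω₁, ‖Φ x - Φ z‖ ≤ ε) :
    ∀ (t : ℕ) (x : Fin t → EuclideanSpace ℝ (Fin d)),
      (∀ i, x i ∈ Ω) → IsUnit (gramM Φ x).det →
      kolmWidth Ω Φ t - ε ≤ ⨆ z : Ω₁, Real.sqrt (Sfun Φ x (z : EuclideanSpace ℝ (Fin d))) := by
  intro t x _ hG
  have := hne.to_subtype
  obtain ⟨C, hC⟩ := hΩ.exists_bound_of_continuousOn hΦ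
  have hbdd : BddAbove (Set.range fun z : Ω₁ => √(Sfun Φ x z)) := by
    refine ⟨C, ?_⟩
    rintro _ ⟨z, rfl⟩
    exact (sqrt_Sfun_le_norm Φ x hG z).trans (hC z (hsub z.2))
  have hwidth := kolmWidth_le_iSup_infDist_span Ω Φ (Φ ∘ x) (Fintype.card_fin t).le
  have hnet_bound := iSup_infDist_le_iSup_add_of_net hnet _ hbdd
    fun z _ => infDist_span_le_sqrt_Sfun Φ x hG z
  linarith

end
end

section
/- Let μ be a Borel probability measure on Ω, let Z_1, …, Z_N be i.i.d. with law μ (equivalently, consider the product measure μ^{⊗N} on Ω^N), let ε > 0, and set f(ε) = inf_{x∈Ω} μ({y ∈ Ω : ϱ(x,y) ≤ ε}). Then the μ^{⊗N}-probability that {Z_1,…,Z_N} is a 2ε-net in (Ω,ϱ) — i.e. that for every x ∈ Ω there is some i with ϱ(x, Z_i) ≤ 2ε — is at least 1 − N(ε,Ω,ϱ) · e^{−N f(ε)}. -/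
open MeasureTheory Filter
open scoped ENNReal

noncomputable section

/-- let `Z_1,…,Z_N` be i.i.d. with law `μ` (i.e. consider the product
measure `μ^{⊗N}`) and set `f(ε) = inf_{x∈Ω} μ{y ∈ Ω : ϱ(x,y) ≤ ε}`. Then the probability
that `{Z_1,…,Z_N}` is a `2ε`-net of `(Ω, ϱ)` is at least
`1 − N(ε,Ω,ϱ)·exp(−N·f(ε))`. -/
theorem sample_is_net_prob {d : ℕ} {H : Type*}
    [NormedAddCommGroup H] [InnerProductSpace ℝ H]
    (Ω : Set (EuclideanSpace ℝ (Fin d))) (hΩ : IsCompact Ω) (hne : Ω.Nonempty)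
    (Φ : EuclideanSpace ℝ (Fin d) → H) (hΦ : ContinuousOn Φ Ω)
    (μ : Measure (EuclideanSpace ℝ (Fin d))) [IsProbabilityMeasure μ] (hμΩ : μ Ωᶜ = 0)
    (N : ℕ) (ε : ℝ) (hε : 0 < ε) :
    ENNReal.ofReal (1 - (covN Ω (fun x y => ‖Φ x - Φ y‖) ε : ℝ) *
        Real.exp (-(N * ⨅ x : Ω, (μ {y | y ∈ Ω ∧ ‖Φ (x : EuclideanSpace ℝ (Fin d)) - Φ y‖ ≤ ε}).toReal))) ≤
      Measure.pi (fun _ : Fin N => μ)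
        {z : Fin N → EuclideanSpace ℝ (Fin d) | ∀ x ∈ Ω, ∃ i, ‖Φ x - Φ (z i)‖ ≤ 2 * ε} := by
  classical
  haveI : Nonempty Ω := hne.to_subtype
  set f : ℝ := ⨅ x : Ω, (μ {y | y ∈ Ω ∧ ‖Φ (x : EuclideanSpace ℝ (Fin d)) - Φ y‖ ≤ ε}).toReal
    with hfdef
  set M : ℕ := covN Ω (fun x y => ‖Φ x - Φ y‖) ε with hMdef
  set ν : Measure (Fin N → EuclideanSpace ℝ (Fin d)) := Measure.pi (fun _ : Fin N => μ) with hν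
  set A : Set (Fin N → EuclideanSpace ℝ (Fin d)) :=
    {z : Fin N → EuclideanSpace ℝ (Fin d) | ∀ x ∈ Ω, ∃ i, ‖Φ x - Φ (z i)‖ ≤ 2 * ε} with hA
  -- The covering set is nonempty, hence `covN` is attained.
  have hSne : {M : ℕ | ∃ z : Fin M → EuclideanSpace ℝ (Fin d),
      (∀ i, z i ∈ Ω) ∧ ∀ x ∈ Ω, ∃ i, (fun x y => ‖Φ x - Φ y‖) x (z i) ≤ ε}.Nonempty := by
    have hK : IsCompact (Φ '' Ω) := hΩ.image_of_continuousOn hΦ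
    obtain ⟨t, hts, htf, hcov⟩ := totallyBounded_iff_subset.1 hK.totallyBounded
      {p : H × H | dist p.1 p.2 < ε} (Metric.dist_mem_uniformity hε)
    choose w hw hΦw using fun (y : t) => hts y.2
    haveI : Fintype t := htf.fintype
    refine ⟨Fintype.card t, fun i => w ((Fintype.equivFin t).symm i), fun i => hw _, ?_⟩
    intro x hx
    have : Φ x ∈ ⋃ y ∈ t, {u | dist u y < ε} := hcov ⟨x, hx, rfl⟩
    obtain ⟨y, hy, hxy⟩ := Set.mem_iUnion₂.1 this
    refine ⟨(Fintype.equivFin t) ⟨y, hy⟩, ?_⟩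
    simp only [Equiv.symm_apply_apply]
    have : Φ (w ⟨y, hy⟩) = y := hΦw ⟨y, hy⟩
    rw [show ‖Φ x - Φ (w ⟨y, hy⟩)‖ = dist (Φ x) (Φ (w ⟨y, hy⟩)) from (dist_eq_norm _ _).symm,
      this]
    exact le_of_lt hxy
  obtain ⟨z, hzΩ, hzcov⟩ : ∃ z : Fin M → EuclideanSpace ℝ (Fin d),
      (∀ i, z i ∈ Ω) ∧ ∀ x ∈ Ω, ∃ i, ‖Φ x - Φ (z i)‖ ≤ ε := Nat.sInf_mem hSne
  -- the closed balls
  set T : Fin M → Set (EuclideanSpace ℝ (Fin d)) :=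
    fun j => {y | y ∈ Ω ∧ ‖Φ (z j) - Φ y‖ ≤ ε} with hT
  have hTclosed : ∀ j, IsClosed (T j) := by
    intro j
    have hcont : ContinuousOn (fun y => ‖Φ (z j) - Φ y‖) Ω := (continuousOn_const.sub hΦ).norm
    have : T j = Ω ∩ (fun y => ‖Φ (z j) - Φ y‖) ⁻¹' Set.Iic ε := by
      ext y; simp [hT, Set.mem_setOf_eq]
    rw [this]
    exact hcont.preimage_isClosed_of_isClosed hΩ.isClosed isClosed_Iic
  have hTmeas : ∀ j, MeasurableSet (T j) := fun j => (hTclosed j).measurableSet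
  -- f ≤ μ(T j)
  have hbdd : BddBelow (Set.range fun x : Ω =>
      (μ {y | y ∈ Ω ∧ ‖Φ (x : EuclideanSpace ℝ (Fin d)) - Φ y‖ ≤ ε}).toReal) := by
    refine ⟨0, ?_⟩
    rintro r ⟨x, rfl⟩
    exact ENNReal.toReal_nonneg
  have hf_le : ∀ j, f ≤ (μ (T j)).toReal := fun j => ciInf_le hbdd (⟨z j, hzΩ j⟩ : Ω)
  have hf_nonneg : 0 ≤ f := le_ciInf fun x => ENNReal.toReal_nonneg
  -- key per-ball bound
  have key : ∀ j : Fin M, ν {zz | ∀ i, zz i ∉ T j} ≤ ENNReal.ofReal (Real.exp (-(N * f))) := by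
    intro j
    set p : ℝ := (μ (T j)).toReal with hp
    have hp0 : 0 ≤ p := ENNReal.toReal_nonneg
    have hp1 : p ≤ 1 := by
      have := prob_le_one (μ := μ) (s := T j)
      simpa [hp] using ENNReal.toReal_mono ENNReal.one_ne_top this
    have hset : {zz : Fin N → EuclideanSpace ℝ (Fin d) | ∀ i, zz i ∉ T j}
        = Set.pi Set.univ (fun _ => (T j)ᶜ) := by
      ext zz; simp [Set.mem_pi]
    have hcompl : μ ((T j)ᶜ) = ENNReal.ofReal (1 - p) := by
      rw [measure_compl (hTmeas j) (measure_ne_top μ _), measure_univ,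
        ENNReal.ofReal_sub _ hp0, ENNReal.ofReal_one, hp,
        ENNReal.ofReal_toReal (measure_ne_top μ _)]
    have hreal : (1 - p) ^ N ≤ Real.exp (-(N * f)) := by
      calc (1 - p) ^ N ≤ (Real.exp (-p)) ^ N := by
            refine pow_le_pow_left₀ (by linarith) ?_ N
            linarith [Real.add_one_le_exp (-p)]
        _ = Real.exp (-(N * p)) := by rw [← Real.exp_nat_mul]; ring_nf
        _ ≤ Real.exp (-(N * f)) := by
            apply Real.exp_le_exp.2
            have : (N : ℝ) * f ≤ (N : ℝ) * p :=
              mul_le_mul_of_nonneg_left (hf_le j) (Nat.cast_nonneg N)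
            linarith
    calc ν {zz | ∀ i, zz i ∉ T j} = ∏ _i : Fin N, μ ((T j)ᶜ) := by
          rw [hset, hν, Measure.pi_pi]
      _ = ENNReal.ofReal ((1 - p) ^ N) := by
          rw [hcompl, Finset.prod_const, Finset.card_univ, Fintype.card_fin,
            ENNReal.ofReal_pow (by linarith)]
      _ ≤ ENNReal.ofReal (Real.exp (-(N * f))) := ENNReal.ofReal_le_ofReal hreal
  -- complement inclusion
  have hsub : Aᶜ ⊆ ⋃ j, {zz : Fin N → EuclideanSpace ℝ (Fin d) | ∀ i, zz i ∉ T j} := by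
    intro zz hzz
    simp only [hA, Set.mem_compl_iff, Set.mem_setOf_eq] at hzz
    push_neg at hzz
    obtain ⟨x, hx, hxall⟩ := hzz
    obtain ⟨j, hj⟩ := hzcov x hx
    refine Set.mem_iUnion.2 ⟨j, fun i hi => ?_⟩
    obtain ⟨hiΩ, hinorm⟩ := hi
    have h2 := hxall i
    have htri : ‖Φ x - Φ (zz i)‖ ≤ ‖Φ x - Φ (z j)‖ + ‖Φ (z j) - Φ (zz i)‖ := by
      calc ‖Φ x - Φ (zz i)‖ = ‖(Φ x - Φ (z j)) + (Φ (z j) - Φ (zz i))‖ := by abel_nf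
        _ ≤ _ := norm_add_le _ _
    linarith
  -- union bound
  have hAc : ν Aᶜ ≤ ENNReal.ofReal ((M : ℝ) * Real.exp (-(N * f))) := by
    calc ν Aᶜ ≤ ν (⋃ j, {zz : Fin N → EuclideanSpace ℝ (Fin d) | ∀ i, zz i ∉ T j}) :=
          measure_mono hsub
      _ ≤ ∑ j : Fin M, ν {zz | ∀ i, zz i ∉ T j} := measure_iUnion_fintype_le _ _
      _ ≤ ∑ _j : Fin M, ENNReal.ofReal (Real.exp (-(N * f))) :=
          Finset.sum_le_sum fun j _ => key j
      _ = (M : ℝ≥0∞) * ENNReal.ofReal (Real.exp (-(N * f))) := by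
          simp [Finset.sum_const, Finset.card_univ, mul_comm]
      _ = ENNReal.ofReal ((M : ℝ) * Real.exp (-(N * f))) := by
          rw [ENNReal.ofReal_mul (Nat.cast_nonneg M), ENNReal.ofReal_natCast]
  have h1 : (1 : ℝ≥0∞) ≤ ν A + ν Aᶜ := by
    have huniv : ν Set.univ = 1 := by
      have : (Set.univ : Set (Fin N → EuclideanSpace ℝ (Fin d)))
          = Set.pi Set.univ (fun _ => Set.univ) := by simp
      rw [this, hν, Measure.pi_pi]; simp
    calc (1 : ℝ≥0∞) = ν Set.univ := huniv.symm
      _ = ν (A ∪ Aᶜ) := by rw [Set.union_compl_self]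
      _ ≤ ν A + ν Aᶜ := measure_union_le _ _
  calc ENNReal.ofReal (1 - (M : ℝ) * Real.exp (-(N * f)))
      = 1 - ENNReal.ofReal ((M : ℝ) * Real.exp (-(N * f))) := by
        rw [ENNReal.ofReal_sub _ (by positivity), ENNReal.ofReal_one]
    _ ≤ 1 - ν Aᶜ := tsub_le_tsub_left hAc 1
    _ ≤ ν A := tsub_le_iff_right.2 h1

end
end

section
/- Suppose d_ϱ < ∞, and that μ is a C-uniform Borel probability measure on Ω: there exist C > 0 and ε_0 > 0 such that μ({y ∈ Ω : ϱ(x,y) ≤ ε'}) ≥ C (ε')^{d_ϱ} for every x ∈ Ω and every ε' ∈ (0, ε_0). Let ε ∈ (0, ε_0), δ ∈ (0,1), and let Z_1, …, Z_N be i.i.d. with law μ. If N ≥ (log N(ε,Ω,ϱ) + log(1/δ)) / (C ε^{d_ϱ}), then with probability at least 1 − δ the set {Z_1,…,Z_N} is a 2ε-net in (Ω,ϱ). -/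
open MeasureTheory Filter
open scoped ENNReal

noncomputable section

lemma covN_set_nonempty {E : Type*} [TopologicalSpace E] {H : Type*} [NormedAddCommGroup H]
    (Ω : Set E) (hΩ : IsCompact Ω) (Φ : E → H) (hΦ : ContinuousOn Φ Ω) {ε : ℝ} (hε : 0 < ε) :
    ∃ M : ℕ, ∃ z : Fin M → E, (∀ i, z i ∈ Ω) ∧ ∀ x ∈ Ω, ∃ i, ‖Φ x - Φ (z i)‖ ≤ ε := by
  classical
  have hK : IsCompact (Φ '' Ω) := hΩ.image_of_continuousOn hΦ
  have htb := hK.totallyBounded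
  rw [totallyBounded_iff_subset] at htb
  obtain ⟨t, htsub, htfin, hcov⟩ := htb _ (Metric.dist_mem_uniformity hε)
  have hch : ∀ y : htfin.toFinset, ∃ x ∈ Ω, Φ x = (y : H) := by
    intro y
    exact htsub (htfin.mem_toFinset.mp y.2)
  refine ⟨htfin.toFinset.card,
    fun i => (hch (htfin.toFinset.equivFin.symm i)).choose, fun i =>
      (hch (htfin.toFinset.equivFin.symm i)).choose_spec.1, ?_⟩
  intro x hx
  have hxK : Φ x ∈ Φ '' Ω := ⟨x, hx, rfl⟩
  obtain ⟨y, hy, hxy⟩ := Set.mem_iUnion₂.mp (hcov hxK)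
  have hyt : y ∈ htfin.toFinset := htfin.mem_toFinset.mpr hy
  refine ⟨htfin.toFinset.equivFin ⟨y, hyt⟩, ?_⟩
  show ‖Φ x - Φ (hch (htfin.toFinset.equivFin.symm
    (htfin.toFinset.equivFin ⟨y, hyt⟩))).choose‖ ≤ ε
  rw [(hch (htfin.toFinset.equivFin.symm (htfin.toFinset.equivFin ⟨y, hyt⟩))).choose_spec.2]
  simp only [Equiv.symm_apply_apply]
  rw [← dist_eq_norm]
  exact le_of_lt hxy

/-- suppose `d_ϱ < ∞` and `μ` is `C`-uniform on `Ω`: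
`μ{y ∈ Ω : ϱ(x,y) ≤ ε'} ≥ C·(ε')^{d_ϱ}` for all `x ∈ Ω`, `ε' ∈ (0,ε₀)`. If
`ε ∈ (0,ε₀)`, `δ ∈ (0,1)` and `N ≥ (log N(ε,Ω,ϱ) + log(1/δ)) / (C ε^{d_ϱ})` then with
probability at least `1 − δ` the i.i.d. sample `Z_1,…,Z_N ∼ μ` is a `2ε`-net of
`(Ω, ϱ)`. -/
theorem c_uniform_sample_is_net {d : ℕ} {H : Type*}
    [NormedAddCommGroup H] [InnerProductSpace ℝ H]
    (Ω : Set (EuclideanSpace ℝ (Fin d))) (hΩ : IsCompact Ω) (hne : Ω.Nonempty)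
    (Φ : EuclideanSpace ℝ (Fin d) → H) (hΦ : ContinuousOn Φ Ω)
    (dρ : ℝ) (hfin : metricDim Ω (fun x y => ‖Φ x - Φ y‖) ≠ ⊤)
    (hdρ : dρ = (metricDim Ω (fun x y => ‖Φ x - Φ y‖)).toReal)
    (μ : Measure (EuclideanSpace ℝ (Fin d))) [IsProbabilityMeasure μ] (hμΩ : μ Ωᶜ = 0)
    (C ε₀ : ℝ) (hC : 0 < C) (hε₀ : 0 < ε₀)
    (hunif : ∀ x ∈ Ω, ∀ ε' ∈ Set.Ioo (0 : ℝ) ε₀,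
      C * ε' ^ dρ ≤ (μ {y | y ∈ Ω ∧ ‖Φ x - Φ y‖ ≤ ε'}).toReal)
    (ε δ : ℝ) (hε : ε ∈ Set.Ioo (0 : ℝ) ε₀) (hδ : δ ∈ Set.Ioo (0 : ℝ) 1)
    (N : ℕ)
    (hN : (Real.log (covN Ω (fun x y => ‖Φ x - Φ y‖) ε) + Real.log (1 / δ)) /
        (C * ε ^ dρ) ≤ N) :
    ENNReal.ofReal (1 - δ) ≤
      Measure.pi (fun _ : Fin N => μ)
        {z : Fin N → EuclideanSpace ℝ (Fin d) | ∀ x ∈ Ω, ∃ i, ‖Φ x - Φ (z i)‖ ≤ 2 * ε} := by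
  classical
  obtain ⟨hε0, hεε₀⟩ := hε
  obtain ⟨hδ0, hδ1⟩ := hδ
  set M := covN Ω (fun x y => ‖Φ x - Φ y‖) ε with hMdef
  -- the covering exists at M = covN
  have hSne : {m : ℕ | ∃ z : Fin m → EuclideanSpace ℝ (Fin d),
      (∀ i, z i ∈ Ω) ∧ ∀ x ∈ Ω, ∃ i, ‖Φ x - Φ (z i)‖ ≤ ε}.Nonempty := by
    obtain ⟨m, z, h1, h2⟩ := covN_set_nonempty Ω hΩ Φ hΦ hε0
    exact ⟨m, z, h1, h2⟩
  have hMmem := Nat.sInf_mem hSne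
  obtain ⟨z, hzΩ, hzcov⟩ := hMmem
  have hM1 : 0 < M := by
    obtain ⟨x, hx⟩ := hne
    obtain ⟨i, -⟩ := hzcov x hx
    exact i.pos
  set p : ℝ := C * ε ^ dρ with hpdef
  have hp0 : 0 < p := mul_pos hC (Real.rpow_pos_of_pos hε0 dρ)
  -- balls
  set B : Fin M → Set (EuclideanSpace ℝ (Fin d)) :=
    fun j => {y | y ∈ Ω ∧ ‖Φ (z j) - Φ y‖ ≤ ε} with hBdef
  have hBmeas : ∀ j, MeasurableSet (B j) := by
    intro j
    have hcl : IsClosed (Ω ∩ (fun y => ‖Φ (z j) - Φ y‖) ⁻¹' Set.Iic ε) :=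
      ContinuousOn.preimage_isClosed_of_isClosed
        ((continuousOn_const.sub hΦ).norm) hΩ.isClosed isClosed_Iic
    have : B j = Ω ∩ (fun y => ‖Φ (z j) - Φ y‖) ⁻¹' Set.Iic ε := rfl
    rw [this]
    exact hcl.measurableSet
  have hBμ : ∀ j, ENNReal.ofReal p ≤ μ (B j) := by
    intro j
    have := hunif (z j) (hzΩ j) ε ⟨hε0, hεε₀⟩
    calc ENNReal.ofReal p ≤ ENNReal.ofReal (μ (B j)).toReal := ENNReal.ofReal_le_ofReal this
    _ = μ (B j) := ENNReal.ofReal_toReal (measure_ne_top μ _)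
  have hp1 : p ≤ 1 := by
    obtain ⟨x, hx⟩ := hne
    have h1 := hunif x hx ε ⟨hε0, hεε₀⟩
    refine h1.trans (ENNReal.toReal_le_of_le_ofReal one_pos.le ?_)
    simpa using prob_le_one (μ := μ) (s := {y | y ∈ Ω ∧ ‖Φ x - Φ y‖ ≤ ε})
  -- complement bound
  have hBc : ∀ j, μ (B j)ᶜ ≤ ENNReal.ofReal (1 - p) := by
    intro j
    rw [prob_compl_eq_one_sub (hBmeas j)]
    rw [show (1 : ℝ≥0∞) = ENNReal.ofReal 1 by simp, ENNReal.ofReal_sub _ hp0.le]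
    exact tsub_le_tsub_left (hBμ j) _
  -- bad events
  set A : Fin M → Set (Fin N → EuclideanSpace ℝ (Fin d)) :=
    fun j => Set.pi Set.univ (fun _ => (B j)ᶜ) with hAdef
  have hAmeas : ∀ j, MeasurableSet (A j) :=
    fun j => MeasurableSet.univ_pi (fun _ => (hBmeas j).compl)
  have hAbound : ∀ j, Measure.pi (fun _ : Fin N => μ) (A j) ≤ ENNReal.ofReal ((1 - p) ^ N) := by
    intro j
    rw [hAdef, Measure.pi_pi]
    rw [Finset.prod_const, Finset.card_univ, Fintype.card_fin]
    rw [ENNReal.ofReal_pow (by linarith : (0:ℝ) ≤ 1 - p)]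
    exact pow_le_pow_left' (hBc j) N
  -- key real inequality
  have hkey : (M : ℝ) * (1 - p) ^ N ≤ δ := by
    have hpN : Real.log M + Real.log (1 / δ) ≤ p * N := by
      rw [div_le_iff₀ hp0] at hN
      linarith [hN]
    have h1 : (1 - p) ^ N ≤ Real.exp (-(p * N)) := by
      have hb : 1 - p ≤ Real.exp (-p) := by
        have := Real.add_one_le_exp (-p)
        linarith
      calc (1 - p) ^ N ≤ (Real.exp (-p)) ^ N :=
            pow_le_pow_left₀ (by linarith) hb N
      _ = Real.exp (-(p * N)) := by
            rw [← Real.exp_nat_mul]; ring_nf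
    have h2 : Real.exp (-(p * N)) ≤ Real.exp (-(Real.log M + Real.log (1 / δ))) := by
      apply Real.exp_le_exp.mpr; linarith
    have hMpos : (0 : ℝ) < M := by exact_mod_cast hM1
    have h3 : Real.exp (-(Real.log M + Real.log (1 / δ))) = (1 / M) * δ := by
      rw [neg_add, Real.exp_add, Real.exp_neg, Real.exp_neg, Real.exp_log hMpos,
        Real.exp_log (by positivity : (0:ℝ) < 1 / δ)]
      field_simp
    calc (M : ℝ) * (1 - p) ^ N ≤ M * Real.exp (-(Real.log M + Real.log (1 / δ))) := by
          apply mul_le_mul_of_nonneg_left (h1.trans h2) hMpos.le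
    _ = δ := by rw [h3]; field_simp
  -- union bound
  set U : Set (Fin N → EuclideanSpace ℝ (Fin d)) := ⋃ j, A j with hUdef
  have hUmeas : MeasurableSet U := MeasurableSet.iUnion hAmeas
  have hUbound : Measure.pi (fun _ : Fin N => μ) U ≤ ENNReal.ofReal δ := by
    calc Measure.pi (fun _ : Fin N => μ) U ≤ ∑ j : Fin M, Measure.pi (fun _ : Fin N => μ) (A j) :=
          measure_iUnion_fintype_le _ _
    _ ≤ ∑ j : Fin M, ENNReal.ofReal ((1 - p) ^ N) := Finset.sum_le_sum fun j _ => hAbound j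
    _ = M * ENNReal.ofReal ((1 - p) ^ N) := by
          rw [Finset.sum_const, Finset.card_univ, Fintype.card_fin, nsmul_eq_mul]
    _ = ENNReal.ofReal (M * (1 - p) ^ N) := by
          rw [ENNReal.ofReal_mul (by positivity)]
          simp
    _ ≤ ENNReal.ofReal δ := ENNReal.ofReal_le_ofReal hkey
  -- good event
  have hsub : Uᶜ ⊆ {w : Fin N → EuclideanSpace ℝ (Fin d) |
      ∀ x ∈ Ω, ∃ i, ‖Φ x - Φ (w i)‖ ≤ 2 * ε} := by
    intro w hw x hx
    obtain ⟨j, hj⟩ := hzcov x hx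
    have hwj : w ∉ A j := fun h => hw (Set.mem_iUnion.mpr ⟨j, h⟩)
    have : ∃ i, w i ∈ B j := by
      by_contra hcon
      push_neg at hcon
      exact hwj (fun i _ => hcon i)
    obtain ⟨i, hiΩ, hinorm⟩ := this
    refine ⟨i, ?_⟩
    calc ‖Φ x - Φ (w i)‖ = ‖(Φ x - Φ (z j)) + (Φ (z j) - Φ (w i))‖ := by
          rw [sub_add_sub_cancel]
    _ ≤ ‖Φ x - Φ (z j)‖ + ‖Φ (z j) - Φ (w i)‖ := norm_add_le _ _
    _ ≤ 2 * ε := by linarith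
  calc ENNReal.ofReal (1 - δ) = 1 - ENNReal.ofReal δ := by
        rw [ENNReal.ofReal_sub _ hδ0.le]; simp
  _ ≤ 1 - Measure.pi (fun _ : Fin N => μ) U := tsub_le_tsub_left hUbound _
  _ = Measure.pi (fun _ : Fin N => μ) Uᶜ := (prob_compl_eq_one_sub hUmeas).symm
  _ ≤ _ := measure_mono hsub

end
end

section
/- Suppose d_ϱ < ∞ and μ is a C-uniform Borel probability measure on Ω with parameters C > 0, ε_0 > 0 (i.e. μ({y ∈ Ω : ϱ(x,y) ≤ ε'}) ≥ C(ε')^{d_ϱ} for all x ∈ Ω and ε' ∈ (0,ε_0)). Let ε ∈ (0,ε_0), δ ∈ (0,1), and Z_1,…,Z_N i.i.d. with law μ with N ≥ (log N(ε,Ω,ϱ) + log(1/δ))/(C ε^{d_ϱ}). Then with probability at least 1 − δ the following holds simultaneously for every t ≥ 0 and every choice of points x_1,…,x_t ∈ {Z_1,…,Z_N} whose Gram matrix G = [K(x_i,x_j)]_{i,j=1}^t is invertible: max_{1≤i≤N} √(S_t(Z_i)) ≥ w_K(t) − 2ε, where S_t(x) = K(x,x) − v(x)ᵀG⁻¹v(x),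 v(x) = (K(x_1,x),…,K(x_t,x))ᵀ, and S_0(x) = K(x,x). In particular, the outputs w_0,…,w_{T−1} of the greedy n-width algorithm run on the sample satisfy w_t ≥ w_K(t) − 2ε for all t with probability at least 1 − δ. -/
/-! Cover `Φ '' Ω` by `N(ε, Ω, ϱ)` balls of radius `ε` centred at points of `Ω`. Each ball has
`μ`-mass at least `C ε ^ dρ`, so all `N` samples miss a given ball with probability at most
`exp (-C ε ^ dρ N)`; by the union bound and the choice of `N`, with probability at least `1 - δ`
every ball is hit, and then every `Φ a`, `a ∈ Ω`, lies within `2ε` of some `Φ (z i)`.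
Deterministically, `S_t(y)` is the squared distance from `Φ y` to the span of the `Φ (x j)`, a
subspace of dimension at most `t`, so `w_K(t) ≤ max_i √(S_t(z_i)) + 2ε`. -/

open MeasureTheory Filter
open scoped ENNReal

noncomputable section

section GramProjection

open Matrix RealInnerProductSpace

variable {E H : Type*} [NormedAddCommGroup H] [InnerProductSpace ℝ H]

lemma Sfun_eq_norm_sub_sq (Φ : E → H) {n : ℕ} (x : Fin n → E) (y : E)
    (hdet : IsUnit (gramM Φ x).det) :
    Sfun Φ x y = ‖Φ y - ∑ i, ((gramM Φ x)⁻¹ *ᵥ kvec Φ x y) i • Φ (x i)‖ ^ 2 := by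
  set c := (gramM Φ x)⁻¹ *ᵥ kvec Φ x y
  set p := ∑ i, c i • Φ (x i)
  have inner_p (w : H) : ⟪p, w⟫ = c ⬝ᵥ fun i => ⟪Φ (x i), w⟫ := by
    simp only [p, sum_inner, real_inner_smul_left, dotProduct]
  -- `p` is the orthogonal projection of `Φ y`: `⟪Φ (x i), p⟫ = (G (G⁻¹ v)) i = v i`
  have inner_basis_p : (fun i => ⟪Φ (x i), p⟫) = kvec Φ x y := by
    have hGc : gramM Φ x *ᵥ c = kvec Φ x y := by
      rw [mulVec_mulVec, mul_nonsing_inv _ hdet, one_mulVec]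
    rw [← hGc]
    ext i
    rw [real_inner_comm, inner_p]
    simp only [gramM, mulVec, dotProduct, of_apply, real_inner_comm (Φ (x i))]
    exact Finset.sum_congr rfl fun j _ => mul_comm _ _
  have horth : ⟪Φ y - p, p⟫ = 0 := by
    rw [inner_sub_left, real_inner_comm, inner_p, inner_p, inner_basis_p, sub_eq_zero]
    rfl
  rw [← real_inner_self_eq_norm_sq, inner_sub_right, horth, sub_zero, inner_sub_left,
    real_inner_comm, inner_p, Sfun, dotProduct_comm]
  rfl

lemma infDist_le_sqrt_Sfun (Φ : E → H) {n : ℕ} (x : Fin n → E) (y : E)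
    (hdet : IsUnit (gramM Φ x).det) {L : Submodule ℝ H} (hL : ∀ i, Φ (x i) ∈ L) :
    Metric.infDist (Φ y) (L : Set H) ≤ Real.sqrt (Sfun Φ x y) := by
  rw [Sfun_eq_norm_sub_sq Φ x y hdet, Real.sqrt_sq (norm_nonneg _), ← dist_eq_norm]
  exact Metric.infDist_le_dist_of_mem
    (L.sum_mem fun i _ => L.smul_mem _ (hL i))

end GramProjection

section KolmogorovWidth

variable {E H : Type*} [NormedAddCommGroup H] [InnerProductSpace ℝ H] {Ω : Set E} {Φ : E → H}

lemma kolmWidth_le_iSup_infDist_span_s11 {n : ℕ} (s : Finset H) (hs : s.card ≤ n) :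
    kolmWidth Ω Φ n ≤ ⨆ a : Ω, Metric.infDist (Φ a) (Submodule.span ℝ (s : Set H)) :=
  ciInf_le
    (f := fun L : {L : Submodule ℝ H // _} => ⨆ a : Ω, Metric.infDist (Φ a) (L.1 : Set H))
    ⟨0, by rintro _ ⟨L, rfl⟩; exact Real.iSup_nonneg fun _ => Metric.infDist_nonneg⟩
    ⟨_, s, hs, rfl⟩

lemma exists_kolmWidth_sub_le_infDist {ι : Type*} [Finite ι] [Nonempty ι] {n : ℕ} {r : ℝ}
    (hr : 0 ≤ r) (z : ι → E) (hnear : ∀ a ∈ Ω, ∃ i, ‖Φ a - Φ (z i)‖ ≤ r)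
    (s : Finset H) (hs : s.card ≤ n) :
    ∃ i, kolmWidth Ω Φ n - r ≤ Metric.infDist (Φ (z i)) (Submodule.span ℝ (s : Set H)) := by
  set L := Submodule.span ℝ (s : Set H)
  obtain ⟨i₀, hi₀⟩ := Finite.exists_max fun i => Metric.infDist (Φ (z i)) (L : Set H)
  refine ⟨i₀, sub_le_iff_le_add.2 <| (kolmWidth_le_iSup_infDist_span_s11 s hs).trans <|
    Real.iSup_le (fun a => ?_) (add_nonneg Metric.infDist_nonneg hr)⟩
  obtain ⟨i, hi⟩ := hnear a a.2
  calc Metric.infDist (Φ a) L ≤ Metric.infDist (Φ (z i)) L + dist (Φ a) (Φ (z i)) :=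
        Metric.infDist_le_infDist_add_dist
    _ ≤ Metric.infDist (Φ (z i₀)) L + r := add_le_add (hi₀ i) (by rwa [dist_eq_norm])

end KolmogorovWidth

lemma exists_cover_covN {E H : Type*} [TopologicalSpace E] [SeminormedAddCommGroup H]
    {Ω : Set E} (hΩ : IsCompact Ω) {Φ : E → H} (hΦ : ContinuousOn Φ Ω) {ε : ℝ} (hε : 0 < ε) :
    ∃ c : Fin (covN Ω (fun x y => ‖Φ x - Φ y‖) ε) → E,
      (∀ i, c i ∈ Ω) ∧ ∀ x ∈ Ω, ∃ i, ‖Φ x - Φ (c i)‖ ≤ ε := by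
  refine Nat.sInf_mem
    (s := {M | ∃ c : Fin M → E, (∀ i, c i ∈ Ω) ∧ ∀ x ∈ Ω, ∃ i, ‖Φ x - Φ (c i)‖ ≤ ε}) ?_
  obtain ⟨t, htΩ, hcover⟩ := hΩ.elim_nhdsWithin_subcover (fun c => Φ ⁻¹' Metric.ball (Φ c) ε)
    fun c hc => (hΦ c hc).preimage_mem_nhdsWithin (Metric.ball_mem_nhds _ hε)
  refine ⟨t.toList.length, t.toList.get,
    fun i => htΩ _ (Finset.mem_toList.1 (List.get_mem _ _)), fun x hx => ?_⟩
  obtain ⟨c, hct, hxc⟩ := Set.mem_iUnion₂.1 (hcover hx)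
  obtain ⟨i, rfl⟩ := List.mem_iff_get.1 (Finset.mem_toList.2 hct)
  exact ⟨i, (mem_ball_iff_norm.1 hxc).le⟩

section Sampling

variable {α : Type*} [MeasurableSpace α] (μ : Measure α) [IsProbabilityMeasure μ]

lemma pi_forall_notMem_le_exp {B : Set α} (hB : MeasurableSet B) {c : ℝ} (hc₀ : 0 ≤ c)
    (hc : ENNReal.ofReal c ≤ μ B) (N : ℕ) :
    Measure.pi (fun _ : Fin N => μ) {z | ∀ i, z i ∉ B} ≤
      ENNReal.ofReal (Real.exp (-(c * N))) := by
  have hpi : {z : Fin N → α | ∀ i, z i ∉ B} = Set.univ.pi fun _ => Bᶜ := by ext; simp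
  rw [hpi, Measure.pi_pi, Finset.prod_const, Finset.card_univ, Fintype.card_fin,
    prob_compl_eq_one_sub hB]
  calc (1 - μ B) ^ N ≤ ENNReal.ofReal (1 - c) ^ N := by
        rw [ENNReal.ofReal_sub _ hc₀, ENNReal.ofReal_one]
        gcongr
    _ ≤ ENNReal.ofReal (Real.exp (-c)) ^ N := by
        gcongr
        linarith [Real.add_one_le_exp (-c)]
    _ = ENNReal.ofReal (Real.exp (-(c * N))) := by
        rw [← ENNReal.ofReal_pow (Real.exp_nonneg _), ← Real.exp_nat_mul]
        ring_nf

lemma ofReal_one_sub_le_pi_forall_exists_mem {ι : Type*} [Fintype ι] {B : ι → Set α}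
    (hB : ∀ k, MeasurableSet (B k)) {c : ℝ} (hc₀ : 0 ≤ c) (hc : ∀ k, ENNReal.ofReal c ≤ μ (B k))
    {N : ℕ} {δ : ℝ} (hδ : Fintype.card ι * Real.exp (-(c * N)) ≤ δ) :
    ENNReal.ofReal (1 - δ) ≤ Measure.pi (fun _ : Fin N => μ) {z | ∀ k, ∃ i, z i ∈ B k} := by
  set P := Measure.pi fun _ : Fin N => μ
  set S := {z : Fin N → α | ∀ k, ∃ i, z i ∈ B k}
  have hmiss : P Sᶜ ≤ ENNReal.ofReal δ := calc
    P Sᶜ = P (⋃ k, {z | ∀ i, z i ∉ B k}) := by congr 1; ext; simp [S]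
    _ ≤ ∑ k, P {z | ∀ i, z i ∉ B k} := measure_iUnion_fintype_le _ _
    _ ≤ ∑ _k : ι, ENNReal.ofReal (Real.exp (-(c * N))) :=
        Finset.sum_le_sum fun k _ => pi_forall_notMem_le_exp μ (hB k) hc₀ (hc k) N
    _ = ENNReal.ofReal (Fintype.card ι * Real.exp (-(c * N))) := by
        rw [Finset.sum_const, Finset.card_univ, nsmul_eq_mul,
          ENNReal.ofReal_mul (Nat.cast_nonneg _), ENNReal.ofReal_natCast]
    _ ≤ ENNReal.ofReal δ := ENNReal.ofReal_le_ofReal hδ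
  have hδ₀ : 0 ≤ δ := (by positivity : (0 : ℝ) ≤ _).trans hδ
  have hsplit : 1 ≤ P S + P Sᶜ := by
    rw [← measure_univ (μ := P), ← Set.union_compl_self S]
    exact measure_union_le _ _
  rw [ENNReal.ofReal_sub _ hδ₀, ENNReal.ofReal_one, tsub_le_iff_right]
  exact hsplit.trans (add_le_add_right hmiss _)

end Sampling

lemma mul_exp_neg_mul_le {M c δ N : ℝ} (hc : 0 < c) (hδ : 0 < δ)
    (hN : (Real.log M + Real.log (1 / δ)) / c ≤ N) : M * Real.exp (-(c * N)) ≤ δ := by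
  rw [div_le_iff₀ hc] at hN
  calc M * Real.exp (-(c * N)) ≤ Real.exp (Real.log M) * Real.exp (-(c * N)) :=
        mul_le_mul_of_nonneg_right (Real.le_exp_log M) (Real.exp_nonneg _)
    _ = Real.exp (Real.log M - c * N) := by rw [← Real.exp_add]; ring_nf
    _ ≤ Real.exp (-Real.log (1 / δ)) := Real.exp_le_exp.2 (by linarith)
    _ = δ := by rw [one_div, Real.log_inv, neg_neg, Real.exp_log hδ]

theorem c_uniform_greedy_lower_bound_general {d : ℕ} {H : Type*}
    [NormedAddCommGroup H] [InnerProductSpace ℝ H]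
    (Ω : Set (EuclideanSpace ℝ (Fin d))) (hΩ : IsCompact Ω)
    (Φ : EuclideanSpace ℝ (Fin d) → H) (hΦ : ContinuousOn Φ Ω)
    (dρ : ℝ)
    (μ : Measure (EuclideanSpace ℝ (Fin d))) [IsProbabilityMeasure μ]
    (C ε₀ : ℝ) (hC : 0 < C)
    (hunif : ∀ x ∈ Ω, ∀ ε' ∈ Set.Ioo (0 : ℝ) ε₀,
      C * ε' ^ dρ ≤ (μ {y | y ∈ Ω ∧ ‖Φ x - Φ y‖ ≤ ε'}).toReal)
    (ε δ : ℝ) (hε : ε ∈ Set.Ioo (0 : ℝ) ε₀) (hδ : δ ∈ Set.Ioo (0 : ℝ) 1)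
    (N : ℕ)
    (hN : (Real.log (covN Ω (fun x y => ‖Φ x - Φ y‖) ε) + Real.log (1 / δ)) /
        (C * ε ^ dρ) ≤ N) :
    ENNReal.ofReal (1 - δ) ≤
      Measure.pi (fun _ : Fin N => μ)
        {z : Fin N → EuclideanSpace ℝ (Fin d) |
          ∀ (t : ℕ) (x : Fin t → EuclideanSpace ℝ (Fin d)),
            (∀ i, ∃ j, x i = z j) → IsUnit (gramM Φ x).det →
            ∃ i : Fin N, kolmWidth Ω Φ t - 2 * ε ≤ Real.sqrt (Sfun Φ x (z i))} := by
  classical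
  obtain ⟨c, hcΩ, hcover⟩ := exists_cover_covN hΩ hΦ hε.1
  have hp : 0 < C * ε ^ dρ := mul_pos hC (Real.rpow_pos_of_pos hε.1 dρ)
  have hball (k) : MeasurableSet {y | y ∈ Ω ∧ ‖Φ (c k) - Φ y‖ ≤ ε} :=
    ((continuousOn_const.sub hΦ).norm.preimage_isClosed_of_isClosed hΩ.isClosed
      isClosed_Iic).measurableSet
  have : Nonempty (Fin N) := ⟨0, Nat.cast_pos.1 <| (div_pos (add_pos_of_nonneg_of_pos
    (Real.log_natCast_nonneg _) (Real.log_pos (one_lt_one_div hδ.1 hδ.2))) hp).trans_le hN⟩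
  refine (ofReal_one_sub_le_pi_forall_exists_mem μ hball hp.le
    (fun k => ENNReal.ofReal_le_of_le_toReal (hunif _ (hcΩ k) ε hε))
    (by simpa using mul_exp_neg_mul_le hp hδ.1 hN)).trans (measure_mono ?_)
  intro z hz t x _ hdet
  have hnear (a) (ha : a ∈ Ω) : ∃ i, ‖Φ a - Φ (z i)‖ ≤ 2 * ε := by
    obtain ⟨k, hk⟩ := hcover a ha
    obtain ⟨i, -, hi⟩ := hz k
    exact ⟨i, (norm_sub_le_norm_sub_add_norm_sub _ (Φ (c k)) _).trans (by linarith)⟩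
  obtain ⟨i, hi⟩ := exists_kolmWidth_sub_le_infDist (by linarith [hε.1]) z hnear
    (Finset.univ.image (Φ ∘ x)) (Finset.card_image_le.trans_eq (Finset.card_fin t))
  exact ⟨i, hi.trans (infDist_le_sqrt_Sfun Φ x (z i) hdet fun j =>
    Submodule.subset_span (by simp))⟩

/-- under the `C`-uniformity assumption and the sample-size condition
`N ≥ (log N(ε,Ω,ϱ) + log(1/δ))/(C ε^{d_ϱ})`, with probability at least `1 − δ` the
sample `Z_1,…,Z_N ∼^{iid} μ` satisfies, simultaneously for every `t ≥ 0` and every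
choice of points `x_1,…,x_t` from the sample with invertible Gram matrix,
`max_{1≤i≤N} √(S_t(Z_i)) ≥ w_K(t) − 2ε`. -/
theorem c_uniform_greedy_lower_bound {d : ℕ} {H : Type*}
    [NormedAddCommGroup H] [InnerProductSpace ℝ H]
    (Ω : Set (EuclideanSpace ℝ (Fin d))) (hΩ : IsCompact Ω) (hne : Ω.Nonempty)
    (Φ : EuclideanSpace ℝ (Fin d) → H) (hΦ : ContinuousOn Φ Ω)
    (dρ : ℝ) (hfin : metricDim Ω (fun x y => ‖Φ x - Φ y‖) ≠ ⊤)
    (hdρ : dρ = (metricDim Ω (fun x y => ‖Φ x - Φ y‖)).toReal)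
    (μ : Measure (EuclideanSpace ℝ (Fin d))) [IsProbabilityMeasure μ] (hμΩ : μ Ωᶜ = 0)
    (C ε₀ : ℝ) (hC : 0 < C) (hε₀ : 0 < ε₀)
    (hunif : ∀ x ∈ Ω, ∀ ε' ∈ Set.Ioo (0 : ℝ) ε₀,
      C * ε' ^ dρ ≤ (μ {y | y ∈ Ω ∧ ‖Φ x - Φ y‖ ≤ ε'}).toReal)
    (ε δ : ℝ) (hε : ε ∈ Set.Ioo (0 : ℝ) ε₀) (hδ : δ ∈ Set.Ioo (0 : ℝ) 1)
    (N : ℕ)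
    (hN : (Real.log (covN Ω (fun x y => ‖Φ x - Φ y‖) ε) + Real.log (1 / δ)) /
        (C * ε ^ dρ) ≤ N) :
    ENNReal.ofReal (1 - δ) ≤
      Measure.pi (fun _ : Fin N => μ)
        {z : Fin N → EuclideanSpace ℝ (Fin d) |
          ∀ (t : ℕ) (x : Fin t → EuclideanSpace ℝ (Fin d)),
            (∀ i, ∃ j, x i = z j) → IsUnit (gramM Φ x).det →
            ∃ i : Fin N, kolmWidth Ω Φ t - 2 * ε ≤ Real.sqrt (Sfun Φ x (z i))} :=
  c_uniform_greedy_lower_bound_general Ω hΩ Φ hΦ dρ μ C ε₀ hC hunif ε δ hε hδ N hN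

end
end

section
/- Let μ be a Borel probability measure on Ω and assume the pair (μ,K) is non-degenerate: for every n ≥ 3, the set of tuples (x_1,…,x_n) ∈ Ω^n for which S'(x_1) = S'(x_2) has μ^{⊗n}-measure zero, where S'(x) = K(x,x) − v'(x)ᵀ(G')⁻¹v'(x) is formed from the points x_3,…,x_n (with the convention S' ≡ 0 if the Gram matrix G' of x_3,…,x_n is singular). Set f(ε) = inf_{x∈Ω} μ({y ∈ Ω : ϱ(x,y) ≤ ε}). Then for every 1 ≤ t ≤ N and ε > 0, the μ^{⊗N}-measure of the set of samples (z_1,…,z_N) ∈ Ω^N for which there exist pairwise distinct indices i_1,…,i_t ∈ {1,…,N} such that, writing a_u = z_{i_u}: (i) for each 1 ≤ u < t the Gram matrix of (a_1,…,a_u) is invertible; (ii) for every u ∈ {1,…,t} and every j ∈ {1,…,N}, S_{u−1}(a_u) ≥ S_{u−1}(z_j), where S_{u−1} is formed from a_1,…,a_{u−1} (S_0(x) = K(x,x)); and (iii) √(S_{t−1}(a_t)) < w_K(t−1) − ε, is at most C(N,t) · e^{−f(ε)(N−t)}, where C(N,t) is the binomial coefficient N choose t. (This event contains the event that the greedy algorithm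 on the sample outputs w_{t−1} < w_K(t−1) − ε.) -/
open MeasureTheory Filter
open scoped ENNReal

noncomputable section

open scoped Classical in
/-- `S_u(y) = K(y,y) − v(y)ᵀ G⁻¹ v(y)` when the Gram matrix `G` of the `u` base points
is invertible, with the convention `S_u ≡ 0` when `G` is singular (and
`S_0(y) = K(y,y)`, the Gram matrix of zero points being the invertible empty matrix). -/
def Sconv {E H : Type*} [NormedAddCommGroup H] [InnerProductSpace ℝ H]
    (Φ : E → H) {n : ℕ} (x : Fin n → E) (y : E) : ℝ :=
  if IsUnit (gramM Φ x).det then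
    (inner ℝ (Φ y) (Φ y) : ℝ) -
      dotProduct (kvec Φ x y) (Matrix.mulVec (gramM Φ x)⁻¹ (kvec Φ x y))
  else 0

/-!
Let `L` be the span of `Φ a_1, …, Φ a_{t-1}`. Since `S_{t-1}(y)` is the squared distance from
`Φ y` to `L` and `a_t` maximises it over the sample, every sample point lies within
`√S_{t-1}(a_t) < w_K(t-1) - ε` of `L`. On the other hand `dim L ≤ t - 1`, so some `x ∈ Ω` has
`dist (Φ x) L ≥ w_K(t-1)`, and the `ϱ`-ball of radius `ε` around `x`, of mass at least `f(ε)`,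
contains no sample point. Conditionally on the `t - 1` selected points, each of the other
`N - t + 1` points avoids that ball with probability at most `1 - f(ε)`; a union bound over the
`(t-1)`-subsets of indices gives `C(N, t-1) (1 - f(ε))^(N-t+1)`. This is at most
`C(N, t) e^{-f(ε)(N-t)}` when `2t ≤ N + 1`, and otherwise `C(N, t) ≥ 3^(N-t)` makes the claimed
bound exceed `1`.
-/

open MeasureTheory Set Metric
open scoped Matrix

theorem infDist_span_range_lt_iff {ι H : Type*} [Fintype ι] [NormedAddCommGroup H]
    [NormedSpace ℝ H] (x : H) (v : ι → H) (C : ℝ) :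
    infDist x (Submodule.span ℝ (range v)) < C ↔ ∃ c : ι → ℝ, ‖x - ∑ i, c i • v i‖ < C := by
  rw [infDist_lt_iff ⟨0, Submodule.zero_mem _⟩]
  constructor
  · rintro ⟨q, hq, hxq⟩
    obtain ⟨c, rfl⟩ := (Submodule.mem_span_range_iff_exists_fun ℝ).mp hq
    exact ⟨c, by rwa [← dist_eq_norm]⟩
  · rintro ⟨c, hc⟩
    exact ⟨_, (Submodule.mem_span_range_iff_exists_fun ℝ).mpr ⟨c, rfl⟩, by rwa [dist_eq_norm]⟩

section Kernel

variable {E H : Type*} [NormedAddCommGroup H] [InnerProductSpace ℝ H]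

theorem Sconv_eq_norm_sub_sq (Φ : E → H) {n : ℕ} (p : Fin n → E)
    (hdet : IsUnit (gramM Φ p).det) (y : E) :
    Sconv Φ p y =
      ‖Φ y - ∑ i, ((gramM Φ p)⁻¹ *ᵥ kvec Φ p y) i • Φ (p i)‖ ^ 2 := by
  set c := (gramM Φ p)⁻¹ *ᵥ kvec Φ p y
  have hGc : gramM Φ p *ᵥ c = kvec Φ p y := by
    rw [Matrix.mulVec_mulVec, Matrix.mul_nonsing_inv _ hdet, Matrix.one_mulVec]
  have hcross : inner ℝ (Φ y) (∑ i, c i • Φ (p i)) = c ⬝ᵥ kvec Φ p y := by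
    simp only [inner_sum, real_inner_smul_right, dotProduct, kvec, real_inner_comm]
  have hsq : inner ℝ (∑ i, c i • Φ (p i)) (∑ i, c i • Φ (p i)) = c ⬝ᵥ kvec Φ p y := by
    rw [← hGc]
    simp only [sum_inner, inner_sum, real_inner_smul_left, real_inner_smul_right, dotProduct,
      Matrix.mulVec, gramM, Matrix.of_apply, Finset.mul_sum]
    exact Finset.sum_congr rfl fun i _ => Finset.sum_congr rfl fun j _ => by
      rw [real_inner_comm (Φ (p i))]; ring
  rw [Sconv, if_pos hdet, norm_sub_sq_real, ← real_inner_self_eq_norm_sq,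
    ← real_inner_self_eq_norm_sq, hcross, hsq, dotProduct_comm]
  ring

theorem infDist_span_le_sqrt_Sconv (Φ : E → H) {n : ℕ} (p : Fin n → E)
    (hdet : IsUnit (gramM Φ p).det) (y : E) :
    infDist (Φ y) (Submodule.span ℝ (range (Φ ∘ p))) ≤ √(Sconv Φ p y) := by
  rw [Sconv_eq_norm_sub_sq Φ p hdet, Real.sqrt_sq (norm_nonneg _), ← dist_eq_norm]
  refine infDist_le_dist_of_mem (Submodule.sum_mem _ fun i _ => Submodule.smul_mem _ _ ?_)
  exact Submodule.subset_span (mem_range_self i)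

/-- Membership in `Ω` is built in because `Φ` is only continuous there, which is what makes
this set measurable. -/
def nearSpan (Ω : Set E) (Φ : E → H) (C : ℝ) {ι : Type*} : Set ((ι → E) × E) :=
  {p | (∀ i, p.1 i ∈ Ω) ∧ p.2 ∈ Ω ∧
    infDist (Φ p.2) (Submodule.span ℝ (range (Φ ∘ p.1))) < C}

theorem exists_powersetCard_nearSpan {ι : Type*} [Fintype ι] {Ω : Set E} {Φ : E → H} {C : ℝ}
    {k : ℕ} (z : ι → E) (hz : ∀ j, z j ∈ Ω) {g : Fin k → ι} (hg : Function.Injective g)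
    (hdet : IsUnit (gramM Φ (z ∘ g)).det) {a : E}
    (hmax : ∀ j, Sconv Φ (z ∘ g) (z j) ≤ Sconv Φ (z ∘ g) a) (ha : √(Sconv Φ (z ∘ g) a) < C) :
    ∃ r ∈ Finset.powersetCard k Finset.univ, ∀ j ∉ r, (fun i : r => z i, z j) ∈ nearSpan Ω Φ C := by
  refine ⟨Finset.univ.map ⟨g, hg⟩, by simp, fun j _ => ⟨fun i => hz i, hz j, ?_⟩⟩
  have hrange : range (Φ ∘ fun i : Finset.univ.map ⟨g, hg⟩ => z i) = range (Φ ∘ z ∘ g) := by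
    ext; simp
  calc infDist (Φ (z j)) (Submodule.span ℝ (range (Φ ∘ fun i : Finset.univ.map ⟨g, hg⟩ => z i)))
      ≤ √(Sconv Φ (z ∘ g) (z j)) := hrange ▸ infDist_span_le_sqrt_Sconv Φ (z ∘ g) hdet (z j)
    _ ≤ √(Sconv Φ (z ∘ g) a) := Real.sqrt_le_sqrt (hmax j)
    _ < C := ha

end Kernel

theorem exists_kolmWidth_le_infDist {E H ι : Type*} [TopologicalSpace E] [NormedAddCommGroup H]
    [InnerProductSpace ℝ H] [Fintype ι] {Ω : Set E} (hΩ : IsCompact Ω) (hne : Ω.Nonempty)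
    {Φ : E → H} (hΦ : ContinuousOn Φ Ω) {k : ℕ} (hk : Fintype.card ι ≤ k) (v : ι → H) :
    ∃ x ∈ Ω, kolmWidth Ω Φ k ≤ infDist (Φ x) (Submodule.span ℝ (range v)) := by
  classical
  have : Nonempty Ω := hne.to_subtype
  set L := Submodule.span ℝ (range v)
  obtain ⟨x, hxΩ, hxmax⟩ :=
    hΩ.exists_isMaxOn hne ((continuous_infDist_pt (L : Set H)).comp_continuousOn hΦ)
  have hbdd : BddBelow (range fun L : {L : Submodule ℝ H // ∃ s : Finset H, s.card ≤ k ∧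
      L = Submodule.span ℝ (s : Set H)} => ⨆ x : Ω, infDist (Φ x) (L.1 : Set H)) := by
    refine ⟨0, ?_⟩
    rintro _ ⟨L, rfl⟩
    exact Real.iSup_nonneg fun _ => infDist_nonneg
  have hL : L = Submodule.span ℝ (Finset.univ.image v : Set H) := by
    rw [Finset.coe_image, Finset.coe_univ, image_univ]
  refine ⟨x, hxΩ, (ciInf_le hbdd ⟨L, _, Finset.card_image_le.trans hk, hL⟩).trans ?_⟩
  exact ciSup_le fun y => hxmax y.2

section Sampling

variable {E H : Type*} [MeasurableSpace E] [NormedAddCommGroup H]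

/-- The paper's `f(ε)`. -/
def minBallMeasure (μ : Measure E) (Ω : Set E) (Φ : E → H) (ε : ℝ) : ℝ :=
  ⨅ x : Ω, (μ {y | y ∈ Ω ∧ ‖Φ x - Φ y‖ ≤ ε}).toReal

theorem minBallMeasure_nonneg (μ : Measure E) (Ω : Set E) (Φ : E → H) (ε : ℝ) :
    0 ≤ minBallMeasure μ Ω Φ ε :=
  Real.iInf_nonneg fun _ => ENNReal.toReal_nonneg

theorem ofReal_minBallMeasure_le (μ : Measure E) [IsFiniteMeasure μ] {Ω : Set E} (Φ : E → H)
    (ε : ℝ) {x : E} (hx : x ∈ Ω) :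
    ENNReal.ofReal (minBallMeasure μ Ω Φ ε) ≤ μ {y | y ∈ Ω ∧ ‖Φ x - Φ y‖ ≤ ε} := by
  have hbdd : BddBelow (range fun x : Ω => (μ {y | y ∈ Ω ∧ ‖Φ x - Φ y‖ ≤ ε}).toReal) :=
    ⟨0, by rintro _ ⟨x, rfl⟩; exact ENNReal.toReal_nonneg⟩
  exact (ENNReal.ofReal_le_ofReal (ciInf_le hbdd ⟨x, hx⟩)).trans_eq
    (ENNReal.ofReal_toReal (measure_ne_top _ _))

theorem minBallMeasure_le_one (μ : Measure E) [IsProbabilityMeasure μ] {Ω : Set E}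
    (hne : Ω.Nonempty) (Φ : E → H) (ε : ℝ) : minBallMeasure μ Ω Φ ε ≤ 1 := by
  obtain ⟨x, hx⟩ := hne
  exact ENNReal.ofReal_le_one.mp ((ofReal_minBallMeasure_le μ Φ ε hx).trans prob_le_one)

variable [InnerProductSpace ℝ H] [TopologicalSpace E] [OpensMeasurableSpace E]

theorem measure_infDist_span_lt_le [T2Space E] {Ω : Set E} (hΩ : IsCompact Ω)
    (hne : Ω.Nonempty) {Φ : E → H} (hΦ : ContinuousOn Φ Ω) (μ : Measure E)
    [IsProbabilityMeasure μ] {ι : Type*} [Fintype ι] {k : ℕ} (hk : Fintype.card ι ≤ k)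
    {C ε : ℝ} (hC : C + ε ≤ kolmWidth Ω Φ k) (v : ι → H) :
    μ {y | y ∈ Ω ∧ infDist (Φ y) (Submodule.span ℝ (range v)) < C} ≤
      1 - ENNReal.ofReal (minBallMeasure μ Ω Φ ε) := by
  obtain ⟨x, hxΩ, hx⟩ := exists_kolmWidth_le_infDist hΩ hne hΦ hk v
  set B := {y | y ∈ Ω ∧ ‖Φ x - Φ y‖ ≤ ε}
  have hB : MeasurableSet B :=
    ((continuousOn_const.sub hΦ).norm.preimage_isClosed_of_isClosed hΩ.isClosed
      isClosed_Iic).measurableSet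
  have hsub : {y | y ∈ Ω ∧ infDist (Φ y) (Submodule.span ℝ (range v)) < C} ⊆ Bᶜ := by
    rintro y ⟨-, hy⟩ ⟨-, hxy⟩
    have := infDist_le_infDist_add_dist (s := (Submodule.span ℝ (range v) : Set H))
      (x := Φ x) (y := Φ y)
    rw [dist_eq_norm] at this
    linarith
  calc _ ≤ μ Bᶜ := measure_mono hsub
    _ = 1 - μ B := prob_compl_eq_one_sub hB
    _ ≤ _ := tsub_le_tsub_left (ofReal_minBallMeasure_le μ Φ ε hxΩ) 1

theorem measurableSet_nearSpan [SecondCountableTopology E] {Ω : Set E} (hΩ : MeasurableSet Ω)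
    {Φ : E → H} (hΦ : ContinuousOn Φ Ω) (C : ℝ) {ι : Type*} [Fintype ι] :
    MeasurableSet (nearSpan Ω Φ C (ι := ι)) := by
  set S : Set ((ι → E) × E) := (univ.pi fun _ => Ω) ×ˢ Ω
  have hS : MeasurableSet S := (MeasurableSet.univ_pi fun _ => hΩ).prod hΩ
  have hcont (c : ι → ℝ) :
      ContinuousOn (fun p : (ι → E) × E => ‖Φ p.2 - ∑ i, c i • Φ (p.1 i)‖) S := by
    refine ((hΦ.comp continuous_snd.continuousOn fun p hp => hp.2).sub
      (continuousOn_finsetSum _ fun i _ => ?_)).norm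
    exact (hΦ.comp ((continuous_apply i).comp continuous_fst).continuousOn
      fun p hp => hp.1 i (mem_univ i)).const_smul (c i)
  -- `nearSpan Ω Φ C` is relatively open in `S`
  choose u hu_open hu using fun c => continuousOn_iff'.mp (hcont c) (Iio C) isOpen_Iio
  convert (isOpen_iUnion hu_open).measurableSet.inter hS using 1
  ext p
  simp only [nearSpan, mem_ofPred_eq, Function.comp_apply, infDist_span_range_lt_iff,
    iUnion_inter, mem_iUnion, ← hu, mem_inter_iff, mem_preimage, mem_Iio, S, mem_prod,
    mem_univ_pi]
  tauto

end Sampling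

theorem measure_pi_forall_notMem_le_pow {ι α : Type*} [Fintype ι] [MeasurableSpace α]
    (μ : Measure α) [IsProbabilityMeasure μ] (r : Finset ι) {R : Set ((r → α) × α)}
    (hR : MeasurableSet R) {q : ℝ≥0∞} (hq : ∀ w, μ (Prod.mk w ⁻¹' R) ≤ q) :
    Measure.pi (fun _ : ι => μ) {z | ∀ j ∉ r, (fun i : r => z i, z j) ∈ R} ≤
      q ^ (Fintype.card ι - r.card) := by
  classical
  set T : Set ((r → α) × ({i // i ∉ r} → α)) := {p | ∀ j, (p.1, p.2 j) ∈ R}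
  have hT : MeasurableSet T := by
    simp only [T, ofPred_forall]
    exact MeasurableSet.iInter fun j =>
      (measurable_fst.prodMk ((measurable_pi_apply j).comp measurable_snd)) hR
  have hslice (w : r → α) :
      Measure.pi (fun _ : {i // i ∉ r} => μ) (Prod.mk w ⁻¹' T) ≤
        q ^ (Fintype.card ι - r.card) := by
    have : Prod.mk w ⁻¹' T = univ.pi fun _ => Prod.mk w ⁻¹' R := by
      ext v; simp [T]
    rw [this, Measure.pi_pi, Finset.prod_const, Finset.card_univ, Fintype.card_subtype_compl,
      Fintype.card_coe]
    exact pow_le_pow_left' (hq w) _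
  have hpre : {z : ι → α | ∀ j ∉ r, (fun i : r => z i, z j) ∈ R} =
      MeasurableEquiv.piEquivPiSubtypeProd (fun _ => α) (· ∈ r) ⁻¹' T := by
    ext z; simp [T]
  rw [hpre, (measurePreserving_piEquivPiSubtypeProd (fun _ => μ) (· ∈ r)).measure_preimage
    hT.nullMeasurableSet, Measure.prod_apply hT]
  exact (lintegral_mono hslice).trans (by simp)

section Greedy

variable {E H : Type*} [MeasurableSpace E] [NormedAddCommGroup H] [InnerProductSpace ℝ H]
  [TopologicalSpace E] [OpensMeasurableSpace E]

theorem measure_pi_le_choose_mul_pow [T2Space E] [SecondCountableTopology E] {Ω : Set E}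
    (hΩ : IsCompact Ω) {Φ : E → H} (hΦ : ContinuousOn Φ Ω) (μ : Measure E)
    [IsProbabilityMeasure μ] (hμΩ : μ Ωᶜ = 0) {ι : Type*} [Fintype ι] {k : ℕ} {C ε : ℝ}
    (hC : C + ε ≤ kolmWidth Ω Φ k) {A : Set (ι → E)}
    (hA : ∀ z ∈ A, (∀ j, z j ∈ Ω) →
      ∃ r ∈ Finset.powersetCard k Finset.univ, ∀ j ∉ r, (fun i : r => z i, z j) ∈ nearSpan Ω Φ C) :
    Measure.pi (fun _ : ι => μ) A ≤
      (Fintype.card ι).choose k *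
        (1 - ENNReal.ofReal (minBallMeasure μ Ω Φ ε)) ^ (Fintype.card ι - k) := by
  have hne : Ω.Nonempty := Filter.nonempty_of_mem (mem_ae_iff.2 hμΩ)
  set q := 1 - ENNReal.ofReal (minBallMeasure μ Ω Φ ε)
  set near : Finset ι → Set (ι → E) :=
    fun r => {z | ∀ j ∉ r, (fun i : r => z i, z j) ∈ nearSpan Ω Φ C}
  have hbad : Measure.pi (fun _ : ι => μ) {z | ∃ j, z j ∉ Ω} = 0 := by
    rw [ofPred_exists]
    exact measure_iUnion_null fun j => Measure.pi_eval_preimage_null (μ := fun _ => μ) (i := j) hμΩ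
  have hnear : ∀ r ∈ Finset.powersetCard k Finset.univ,
      Measure.pi (fun _ : ι => μ) (near r) ≤ q ^ (Fintype.card ι - k) := by
    intro r hr
    have hcard : r.card = k := (Finset.mem_powersetCard.1 hr).2
    refine (measure_pi_forall_notMem_le_pow μ r (measurableSet_nearSpan hΩ.isClosed.measurableSet
      hΦ C) fun w => ?_).trans_eq (by rw [hcard])
    refine (measure_mono ?_).trans
      (measure_infDist_span_lt_le hΩ hne hΦ μ (by simp [hcard]) hC (Φ ∘ w))
    exact fun y hy => ⟨hy.2.1, hy.2.2⟩
  have hcover : A ⊆ {z | ∃ j, z j ∉ Ω} ∪ ⋃ r ∈ Finset.powersetCard k Finset.univ, near r := by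
    intro z hz
    by_cases hzΩ : ∀ j, z j ∈ Ω
    · obtain ⟨r, hr, hzr⟩ := hA z hz hzΩ
      exact Or.inr (mem_biUnion hr hzr)
    · exact Or.inl (not_forall.1 hzΩ)
  calc Measure.pi (fun _ : ι => μ) A
      ≤ 0 + ∑ r ∈ Finset.powersetCard k Finset.univ, Measure.pi (fun _ : ι => μ) (near r) :=
        (measure_mono hcover).trans ((measure_union_le _ _).trans
          (add_le_add hbad.le (measure_biUnion_finset_le _ _)))
    _ ≤ ∑ r ∈ Finset.powersetCard k Finset.univ, q ^ (Fintype.card ι - k) := by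
        rw [zero_add]; exact Finset.sum_le_sum hnear
    _ = _ := by simp [Finset.card_powersetCard]

end Greedy

theorem Nat.choose_le_succ_of_two_mul_lt {n k : ℕ} (h : 2 * k < n) :
    n.choose k ≤ n.choose (k + 1) := by
  refine Nat.le_of_mul_le_mul_right ?_ k.succ_pos
  rw [Nat.choose_succ_right_eq]
  exact Nat.mul_le_mul_left _ (by omega)

theorem Nat.three_pow_le_choose (j : ℕ) : 3 ^ j ≤ (2 * j + 2).choose j := by
  induction j with
  | zero => simp
  | succ j ih =>
    have hpascal : (2 * j + 4).choose (j + 1) = (2 * j + 3).choose j + (2 * j + 3).choose (j + 1) :=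
      Nat.choose_succ_succ _ _
    have hmono : (2 * j + 2).choose j ≤ (2 * j + 3).choose j := Nat.choose_le_succ _ _
    have hsucc : (2 * j + 3) * (2 * j + 2).choose j = (2 * j + 3).choose (j + 1) * (j + 1) :=
      Nat.add_one_mul_choose_eq _ _
    rw [show 2 * (j + 1) + 2 = 2 * j + 4 by ring, hpascal, pow_succ]
    nlinarith

theorem choose_pred_mul_pow_le_choose_mul_exp {N t : ℕ} (htN : t ≤ N) (h : 2 * t ≤ N + 1)
    {F : ℝ} (hF0 : 0 ≤ F) (hF1 : F ≤ 1) :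
    (N.choose (t - 1) : ℝ) * (1 - F) ^ (N - (t - 1)) ≤ N.choose t * Real.exp (-F * (N - t)) := by
  have hchoose : N.choose (t - 1) ≤ N.choose t := by
    rcases t with _ | t
    · rfl
    · exact Nat.choose_le_succ_of_two_mul_lt (by omega)
  have hpow : (1 - F) ^ (N - (t - 1)) ≤ Real.exp (-F * (N - t)) :=
    calc (1 - F) ^ (N - (t - 1)) ≤ (1 - F) ^ (N - t) :=
          pow_le_pow_of_le_one (by linarith) (by linarith) (by omega)
      _ ≤ Real.exp (-F) ^ (N - t) :=
          pow_le_pow_left₀ (by linarith) (by linarith [Real.add_one_le_exp (-F)]) _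
      _ = Real.exp (-F * (N - t)) := by
          rw [← Real.exp_nat_mul, Nat.cast_sub htN]; ring_nf
  exact mul_le_mul (by exact_mod_cast hchoose) hpow (by positivity) (by positivity)

theorem one_le_choose_mul_exp {N t : ℕ} (htN : t ≤ N) (h : N + 1 < 2 * t) {F : ℝ}
    (hF1 : F ≤ 1) : 1 ≤ N.choose t * Real.exp (-F * (N - t)) := by
  have hcast : ((N - t : ℕ) : ℝ) = N - t := Nat.cast_sub htN
  have hchoose : 3 ^ (N - t) ≤ N.choose t := by
    rw [← Nat.choose_symm htN]
    exact (Nat.three_pow_le_choose _).trans (Nat.choose_le_choose _ (by omega))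
  have hexp : Real.exp (F * (N - t)) ≤ N.choose t :=
    calc Real.exp (F * (N - t)) ≤ Real.exp 1 ^ (N - t) := by
          rw [← Real.exp_nat_mul, hcast, mul_one, Real.exp_le_exp]
          exact mul_le_of_le_one_left (by rw [← hcast]; positivity) hF1
      _ ≤ 3 ^ (N - t) := pow_le_pow_left₀ (Real.exp_pos 1).le Real.exp_one_lt_three.le _
      _ ≤ N.choose t := by exact_mod_cast hchoose
  rw [neg_mul, Real.exp_neg, ← div_eq_mul_inv, one_le_div (Real.exp_pos _)]
  exact hexp

theorem le_ofReal_choose_mul_exp {N t : ℕ} (htN : t ≤ N) {F : ℝ} (hF0 : 0 ≤ F) (hF1 : F ≤ 1)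
    {m : ℝ≥0∞} (hm1 : m ≤ 1)
    (hm : m ≤ N.choose (t - 1) * (1 - ENNReal.ofReal F) ^ (N - (t - 1))) :
    m ≤ ENNReal.ofReal (N.choose t * Real.exp (-F * (N - t))) := by
  rcases le_or_gt (2 * t) (N + 1) with h | h
  · refine hm.trans (le_of_eq_of_le ?_ (ENNReal.ofReal_le_ofReal
      (choose_pred_mul_pow_le_choose_mul_exp htN h hF0 hF1)))
    rw [ENNReal.ofReal_mul (by positivity), ENNReal.ofReal_natCast, ENNReal.ofReal_pow
      (by linarith), ENNReal.ofReal_sub _ hF0, ENNReal.ofReal_one]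
  · exact hm1.trans (ENNReal.one_le_ofReal.2 (one_le_choose_mul_exp htN h hF1))

/-- if `(μ, K)` is non-degenerate then, for `1 ≤ t ≤ N` and `ε > 0`, the
`μ^{⊗N}`-measure of the set of samples admitting pairwise distinct indices `i_1,…,i_t`
with (i) invertible Gram matrices of all proper prefixes, (ii) each `a_u = z_{i_u}`
maximizing `S_{u−1}` over the sample, and (iii) `√(S_{t−1}(a_t)) < w_K(t−1) − ε`, is at
most `(N choose t)·exp(−f(ε)(N−t))`, where `f(ε) = inf_{x∈Ω} μ{y ∈ Ω : ϱ(x,y) ≤ ε}`. -/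
theorem greedy_underestimate_prob {d : ℕ} {H : Type*}
    [NormedAddCommGroup H] [InnerProductSpace ℝ H]
    (Ω : Set (EuclideanSpace ℝ (Fin d))) (hΩ : IsCompact Ω)
    (Φ : EuclideanSpace ℝ (Fin d) → H) (hΦ : ContinuousOn Φ Ω)
    (μ : Measure (EuclideanSpace ℝ (Fin d))) [IsProbabilityMeasure μ] (hμΩ : μ Ωᶜ = 0)
    (N t : ℕ) (ht : 1 ≤ t) (htN : t ≤ N) (ε : ℝ) :
    Measure.pi (fun _ : Fin N => μ)
      {z : Fin N → EuclideanSpace ℝ (Fin d) |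
        ∃ idx : Fin t → Fin N, Function.Injective idx ∧
          (∀ u : ℕ, ∀ hu : u < t,
            IsUnit (gramM Φ (fun v : Fin u => z (idx ⟨v.1, v.2.trans hu⟩))).det) ∧
          (∀ u : Fin t, ∀ j : Fin N,
            Sconv Φ (fun v : Fin u.1 => z (idx ⟨v.1, v.2.trans u.2⟩)) (z j) ≤
              Sconv Φ (fun v : Fin u.1 => z (idx ⟨v.1, v.2.trans u.2⟩)) (z (idx u))) ∧
          Real.sqrt (Sconv Φ
              (fun v : Fin (t - 1) => z (idx ⟨v.1, lt_of_lt_of_le v.2 (Nat.sub_le t 1)⟩))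
              (z (idx ⟨t - 1, Nat.sub_lt ht Nat.one_pos⟩)))
            < kolmWidth Ω Φ (t - 1) - ε} ≤
      ENNReal.ofReal ((N.choose t : ℝ) *
        Real.exp (-(⨅ x : Ω,
            (μ {y | y ∈ Ω ∧ ‖Φ (x : EuclideanSpace ℝ (Fin d)) - Φ y‖ ≤ ε}).toReal) *
          ((N : ℝ) - t))) := by
  have hne : Ω.Nonempty := Filter.nonempty_of_mem (mem_ae_iff.2 hμΩ)
  refine le_ofReal_choose_mul_exp htN (minBallMeasure_nonneg μ Ω Φ ε)
    (minBallMeasure_le_one μ hne Φ ε) prob_le_one ?_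
  refine (measure_pi_le_choose_mul_pow hΩ hΦ μ hμΩ (sub_add_cancel _ ε).le ?_).trans_eq
    (by rw [Fintype.card_fin])
  rintro z ⟨idx, hinj, hdet, hmax, hlt⟩ hz
  exact exists_powersetCard_nearSpan z hz (hinj.comp (Fin.castLE_injective (Nat.sub_le t 1)))
    (hdet (t - 1) (Nat.sub_lt ht Nat.one_pos)) (hmax ⟨t - 1, Nat.sub_lt ht Nat.one_pos⟩) hlt
end
end
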